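/- arXiv:2406.07464 — 8 statements merged into one kernel-verified Lean document; each statement's English description precedes it below -/
import Mathlib

section
/- Let Z be a standard Gaussian random vector on ℝ^q (law N(0, I_q)) and let A, B ∈ M_{d,q}(ℝ). If B Bᵀ − A Aᵀ is symmetric positive semi-definite, then A Z is dominated by B Z for the convex order, i.e. E f(A Z) ≤ E f(B Z) for every convex f : ℝ^d → ℝ such that f(A Z) and f(B Z) are integrable. -/
open MeasureTheory ProbabilityTheory Matrix ENNReal

section Helpers

variable {ι : Type*} [Fintype ι]

lemma my_meas_mulVec {m : Type*} [Fintype m] (K : Matrix m ι ℝ) : Measurable K.mulVec := by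
  have := (Matrix.mulVecLin K).continuous_of_finiteDimensional.measurable
  simpa only [Matrix.coe_mulVecLin] using this

lemma my_cont_mulVec {m : Type*} [Fintype m] (K : Matrix m ι ℝ) : Continuous K.mulVec := by
  have := (Matrix.mulVecLin K).continuous_of_finiteDimensional
  simpa only [Matrix.coe_mulVecLin] using this

lemma my_lintegral_prod_gauss (g : ι → ℝ → ℝ) (hnn : ∀ i x, 0 ≤ g i x)
    (hint : ∀ i, Integrable (g i)) :
    ∫⁻ x : ι → ℝ, ENNReal.ofReal (∏ i, g i (x i)) =
      ∏ i, ∫⁻ y : ℝ, ENNReal.ofReal (g i y) := by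
  have hI : Integrable (fun x : ι → ℝ => ∏ i, g i (x i)) :=
    Integrable.fintype_prod (f := g) hint
  rw [← ofReal_integral_eq_lintegral_ofReal hI
    (ae_of_all _ fun x => Finset.prod_nonneg fun i _ => hnn i (x i)),
    integral_fintype_prod_volume_eq_prod (f := g)]
  rw [ENNReal.ofReal_prod_of_nonneg (fun i _ => integral_nonneg (hnn i))]
  exact Finset.prod_congr rfl fun i _ =>
    ofReal_integral_eq_lintegral_ofReal (hint i) (ae_of_all _ (hnn i))

lemma my_pi_gaussian_eq_withDensity :
    (Measure.pi fun _ : ι => gaussianReal 0 1) =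
      volume.withDensity (fun x => ENNReal.ofReal (∏ i, gaussianPDFReal 0 1 (x i))) := by
  classical
  refine Measure.pi_eq fun s hs => ?_
  rw [withDensity_apply _ (MeasurableSet.univ_pi hs),
    ← lintegral_indicator (MeasurableSet.univ_pi hs)]
  have hind : ∀ x : ι → ℝ, (Set.univ.pi s).indicator
      (fun x => ENNReal.ofReal (∏ i, gaussianPDFReal 0 1 (x i))) x
      = ENNReal.ofReal (∏ i, (s i).indicator (gaussianPDFReal 0 1) (x i)) := by
    intro x
    by_cases hx : x ∈ Set.univ.pi s
    · rw [Set.indicator_of_mem hx]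
      congr 1
      exact Finset.prod_congr rfl fun i _ =>
        (Set.indicator_of_mem (hx i (Set.mem_univ i)) _).symm
    · rw [Set.indicator_of_notMem hx]
      obtain ⟨i, hi⟩ := not_forall.mp (Set.mem_univ_pi.not.mp hx)
      rw [Finset.prod_eq_zero (Finset.mem_univ i) (Set.indicator_of_notMem hi _),
        ENNReal.ofReal_zero]
  simp_rw [hind]
  rw [my_lintegral_prod_gauss (fun i => (s i).indicator (gaussianPDFReal 0 1))
    (fun i x => Set.indicator_nonneg (fun y _ => gaussianPDFReal_nonneg 0 1 y) x)
    (fun i => (integrable_gaussianPDFReal 0 1).indicator (hs i))]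
  refine Finset.prod_congr rfl fun i _ => ?_
  rw [gaussianReal_apply 0 (by norm_num) (s i), ← lintegral_indicator (hs i)]
  congr 1
  ext y
  by_cases hy : y ∈ s i
  · rw [Set.indicator_of_mem hy, Set.indicator_of_mem hy, gaussianPDF]
  · rw [Set.indicator_of_notMem hy, Set.indicator_of_notMem hy, ENNReal.ofReal_zero]

lemma my_map_withDensity {α β : Type*} [MeasurableSpace α] [MeasurableSpace β]
    (e : α ≃ᵐ β) (μ : Measure α) {g : α → ℝ≥0∞} (hg : Measurable g) :
    Measure.map e (μ.withDensity g) = (Measure.map e μ).withDensity (g ∘ e.symm) := by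
  refine Measure.ext fun s hs => ?_
  rw [Measure.map_apply e.measurable hs, withDensity_apply _ (e.measurable hs),
    withDensity_apply _ hs,
    setLIntegral_map hs (hg.comp e.symm.measurable) e.measurable]
  refine setLIntegral_congr_fun (e.measurable hs) (fun x _ => ?_)
  simp

lemma my_prod_pdf_rot [DecidableEq ι] (O : Matrix ι ι ℝ) (hO : O * Oᵀ = 1) (y : ι → ℝ) :
    ∏ i, gaussianPDFReal 0 1 (Oᵀ.mulVec y i) = ∏ i, gaussianPDFReal 0 1 (y i) := by
  have hsum : ∑ i, (Oᵀ.mulVec y i)^2 = ∑ i, (y i)^2 := by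
    have h1 : ∀ v : ι → ℝ, ∑ i, (v i)^2 = v ⬝ᵥ v := by
      intro v; simp [dotProduct, pow_two]
    rw [h1, h1, Matrix.dotProduct_mulVec, Matrix.vecMul_transpose, Matrix.mulVec_mulVec, hO,
      Matrix.one_mulVec]
  have hpdf : ∀ t : ℝ, gaussianPDFReal 0 1 t
      = (Real.sqrt (2 * Real.pi))⁻¹ * Real.exp (-(t^2/2)) := by
    intro t
    simp [gaussianPDFReal, neg_div]
  simp_rw [hpdf, Finset.prod_mul_distrib, ← Real.exp_sum]
  have e : ∀ v : ι → ℝ, ∑ i, -((v i)^2/2) = -((∑ i, (v i)^2)/2) := fun v => by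
    rw [Finset.sum_div, ← Finset.sum_neg_distrib]
  rw [show ∑ i, -((Oᵀ.mulVec y i)^2/2) = ∑ i, -((y i)^2/2) by rw [e, e, hsum]]

lemma my_map_volume [DecidableEq ι] (O : Matrix ι ι ℝ) (hO : O * Oᵀ = 1) :
    Measure.map (O.mulVec) (volume : Measure (ι → ℝ)) = volume := by
  have h := congrArg Matrix.det hO
  rw [Matrix.det_mul, Matrix.det_transpose, Matrix.det_one] at h
  have hdet : O.det ≠ 0 := by nlinarith
  have habs : |O.det⁻¹| = 1 := by
    rw [abs_inv]; rw [show |O.det| = 1 by nlinarith [abs_nonneg O.det, sq_abs O.det]]; norm_num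
  have hmm := Real.map_matrix_volume_pi_eq_smul_volume_pi hdet
  rw [habs, ENNReal.ofReal_one, one_smul] at hmm
  rw [show O.mulVec = ⇑(Matrix.toLin' O) by funext x; simp [Matrix.toLin'_apply]]
  exact hmm

noncomputable def matrixMeasEquiv [DecidableEq ι] (O : Matrix ι ι ℝ) (hO : O * Oᵀ = 1) :
    (ι → ℝ) ≃ᵐ (ι → ℝ) where
  toFun := O.mulVec
  invFun := Oᵀ.mulVec
  left_inv x := by
    rw [Matrix.mulVec_mulVec, mul_eq_one_comm.mp hO, Matrix.one_mulVec]
  right_inv x := by rw [Matrix.mulVec_mulVec, hO, Matrix.one_mulVec]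
  measurable_toFun := my_meas_mulVec O
  measurable_invFun := my_meas_mulVec Oᵀ

lemma my_rot_invariant [DecidableEq ι] (O : Matrix ι ι ℝ) (hO : O * Oᵀ = 1) :
    Measure.map (O.mulVec) (Measure.pi fun _ : ι => gaussianReal 0 1)
      = Measure.pi fun _ : ι => gaussianReal 0 1 := by
  set g : (ι → ℝ) → ℝ≥0∞ := fun x => ENNReal.ofReal (∏ i, gaussianPDFReal 0 1 (x i)) with hg
  have hgm : Measurable g := by
    apply Measurable.ennreal_ofReal
    exact Finset.measurable_prod _ fun i _ =>
      (measurable_gaussianPDFReal 0 1).comp (measurable_pi_apply i)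
  have he : ⇑(matrixMeasEquiv O hO) = O.mulVec := rfl
  have hes : ⇑(matrixMeasEquiv O hO).symm = Oᵀ.mulVec := rfl
  rw [my_pi_gaussian_eq_withDensity, ← he,
    my_map_withDensity (matrixMeasEquiv O hO) volume hgm, he, hes, my_map_volume O hO]
  congr 1
  funext y
  simp only [Function.comp_apply, hg]
  rw [my_prod_pdf_rot O hO y]

lemma my_exists_rot [DecidableEq ι] {d : ℕ} (M N : Matrix (Fin d) ι ℝ) (h : M * Mᵀ = N * Nᵀ) :
    ∃ O : Matrix ι ι ℝ, O * Oᵀ = 1 ∧ N.mulVec = M.mulVec ∘ O.mulVec := by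
  classical
  let E := EuclideanSpace ℝ ι
  let φ : (Fin d → ℝ) →ₗ[ℝ] E :=
    { toFun := fun c => WithLp.toLp 2 (Mᵀ.mulVec c : ι → ℝ)
      map_add' := fun a b => congrArg (WithLp.toLp 2) (Matrix.mulVec_add _ a b)
      map_smul' := fun r a => congrArg (WithLp.toLp 2) (Matrix.mulVec_smul _ r a) }
  let ψ : (Fin d → ℝ) →ₗ[ℝ] E :=
    { toFun := fun c => WithLp.toLp 2 (Nᵀ.mulVec c : ι → ℝ)
      map_add' := fun a b => congrArg (WithLp.toLp 2) (Matrix.mulVec_add _ a b)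
      map_smul' := fun r a => congrArg (WithLp.toLp 2) (Matrix.mulVec_smul _ r a) }
  have hnormsq : ∀ x : E, ‖x‖^2 = ∑ i, x i * x i := by
    intro x
    rw [EuclideanSpace.norm_eq, Real.sq_sqrt (by positivity)]
    simp [sq]
  have hdotsq : ∀ (K : Matrix (Fin d) ι ℝ) (c : Fin d → ℝ),
      ∑ i, (Kᵀ.mulVec c) i * (Kᵀ.mulVec c) i = ((K * Kᵀ).mulVec c) ⬝ᵥ c := by
    intro K c
    rw [show ∑ i, (Kᵀ.mulVec c) i * (Kᵀ.mulVec c) i = (Kᵀ.mulVec c) ⬝ᵥ (Kᵀ.mulVec c) from rfl,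
      Matrix.dotProduct_mulVec, Matrix.vecMul_transpose, Matrix.mulVec_mulVec]
  have hnorm : ∀ c, ‖φ c‖ = ‖ψ c‖ := by
    intro c
    have h1 : ‖φ c‖^2 = ‖ψ c‖^2 := by
      rw [hnormsq, hnormsq]
      show ∑ i, (Mᵀ.mulVec c) i * (Mᵀ.mulVec c) i = ∑ i, (Nᵀ.mulVec c) i * (Nᵀ.mulVec c) i
      rw [hdotsq, hdotsq, h]
    have h2 := congrArg Real.sqrt h1
    rwa [Real.sqrt_sq (norm_nonneg _), Real.sqrt_sq (norm_nonneg _)] at h2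
  have hker : LinearMap.ker φ ≤ LinearMap.ker ψ := by
    intro c hc
    rw [LinearMap.mem_ker] at hc ⊢
    have := hnorm c
    rw [hc, norm_zero] at this
    exact norm_eq_zero.mp this.symm
  let ψ' := (LinearMap.ker φ).liftQ ψ hker
  let eφ := φ.quotKerEquivRange
  let L0 : LinearMap.range φ →ₗ[ℝ] E := ψ' ∘ₗ (eφ.symm.toLinearMap)
  have hL0 : ∀ c : Fin d → ℝ, L0 ⟨φ c, LinearMap.mem_range_self φ c⟩ = ψ c := by
    intro c
    have h1 : eφ (Submodule.Quotient.mk c) = ⟨φ c, LinearMap.mem_range_self φ c⟩ :=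
      Subtype.ext (φ.quotKerEquivRange_apply_mk c)
    show ψ' (eφ.symm ⟨φ c, LinearMap.mem_range_self φ c⟩) = ψ c
    rw [← h1, LinearEquiv.symm_apply_apply]
    exact Submodule.liftQ_apply _ _ _
  have hL0norm : ∀ v : LinearMap.range φ, ‖L0 v‖ = ‖v‖ := by
    rintro ⟨v, c, rfl⟩
    have : (⟨φ c, ⟨c, rfl⟩⟩ : LinearMap.range φ) = ⟨φ c, LinearMap.mem_range_self φ c⟩ := rfl
    rw [this, hL0]
    show ‖ψ c‖ = ‖φ c‖
    exact (hnorm c).symm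
  let L : LinearMap.range φ →ₗᵢ[ℝ] E := ⟨L0, hL0norm⟩
  let U := L.extend
  have hU : ∀ c, U (φ c) = ψ c := by
    intro c
    have h2 := L.extend_apply ⟨φ c, LinearMap.mem_range_self φ c⟩
    have h3 : L ⟨φ c, LinearMap.mem_range_self φ c⟩ = ψ c := hL0 c
    rw [h3] at h2
    exact h2
  let U' : (ι → ℝ) →ₗ[ℝ] (ι → ℝ) := (WithLp.linearEquiv 2 ℝ (ι → ℝ)).toLinearMap ∘ₗ U.toLinearMap ∘ₗ (WithLp.linearEquiv 2 ℝ (ι → ℝ)).symm.toLinearMap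
  let W : Matrix ι ι ℝ := LinearMap.toMatrix' U'
  have hWU : ∀ x : ι → ℝ, W.mulVec x = U' x := by
    intro x
    rw [show W.mulVec x = Matrix.toLin' W x from rfl]
    rw [show Matrix.toLin' W = U' by rw [Matrix.toLin'_toMatrix']]
  have hdot : ∀ x y : ι → ℝ, (W.mulVec x) ⬝ᵥ (W.mulVec y) = x ⬝ᵥ y := by
    intro x y
    have h4 := U.inner_map_map (WithLp.toLp 2 x) (WithLp.toLp 2 y)
    rw [PiLp.inner_apply, PiLp.inner_apply] at h4
    simp only [RCLike.inner_apply', starRingEnd_apply, star_trivial] at h4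
    rw [hWU, hWU]
    exact h4
  have hWtW : Wᵀ * W = 1 := by
    ext i j
    have h5 := hdot (Pi.single i 1) (Pi.single j 1)
    have hcol : ∀ (k : ι), W.mulVec (Pi.single k 1) = fun l => W l k := by
      intro k; funext l
      simp [Matrix.mulVec_single]
    rw [hcol, hcol] at h5
    have h6 : (Pi.single i 1 : ι → ℝ) ⬝ᵥ Pi.single j 1 = (1 : Matrix ι ι ℝ) i j := by
      simp [dotProduct, Pi.single_apply, Matrix.one_apply, eq_comm]
    rw [h6] at h5
    rw [← h5, Matrix.mul_apply]
    simp [Matrix.transpose_apply, dotProduct, eq_comm]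
  refine ⟨Wᵀ, by rw [Matrix.transpose_transpose]; exact hWtW, ?_⟩
  funext x
  funext i
  have hrow : W.mulVec (fun j => M i j) = fun j => N i j := by
    have h8 : φ (Pi.single i 1) = (fun j => M i j : ι → ℝ) := by
      show Mᵀ.mulVec (Pi.single i 1) = _
      funext j; simp [Matrix.mulVec_single, Matrix.mulVec, dotProduct, Pi.single_apply]
    have h9 : ψ (Pi.single i 1) = (fun j => N i j : ι → ℝ) := by
      show Nᵀ.mulVec (Pi.single i 1) = _
      funext j; simp [Matrix.mulVec_single, Matrix.mulVec, dotProduct, Pi.single_apply]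
    rw [hWU]
    show U' ((fun j => M i j : ι → ℝ)) = _
    rw [← h8, ← h9]
    exact congrArg WithLp.ofLp (hU (Pi.single i 1))
  show (N.mulVec x) i = (M.mulVec (Wᵀ.mulVec x)) i
  have h10 : (M.mulVec (Wᵀ.mulVec x)) i = (fun j => M i j) ⬝ᵥ (Wᵀ.mulVec x) := rfl
  have h11 : (N.mulVec x) i = (fun j => N i j) ⬝ᵥ x := rfl
  rw [h10, h11, Matrix.dotProduct_mulVec, Matrix.vecMul_transpose, hrow]

lemma my_map_eq [DecidableEq ι] {d : ℕ} (M N : Matrix (Fin d) ι ℝ) (h : M * Mᵀ = N * Nᵀ) :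
    Measure.map N.mulVec (Measure.pi fun _ : ι => gaussianReal 0 1)
      = Measure.map M.mulVec (Measure.pi fun _ : ι => gaussianReal 0 1) := by
  obtain ⟨O, hO, hNM⟩ := my_exists_rot M N h
  rw [hNM, ← Measure.map_map (my_meas_mulVec M) (my_meas_mulVec O), my_rot_invariant O hO]

lemma my_integrable_id_gauss : Integrable (fun x : ℝ => x) (gaussianReal 0 1) := by
  rw [gaussianReal_of_var_ne_zero 0 one_ne_zero]
  rw [integrable_withDensity_iff (measurable_gaussianPDF 0 1)
    (ae_of_all _ fun x => ENNReal.ofReal_lt_top)]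
  have h1 : Integrable (fun x : ℝ => x * Real.exp (-(2⁻¹:ℝ) * x^2)) := by
    have := integrable_rpow_mul_exp_neg_mul_sq (b := (2⁻¹:ℝ)) (by norm_num) (s := 1) (by norm_num)
    simpa [Real.rpow_one] using this
  have h2 : (fun x : ℝ => x * (gaussianPDF 0 1 x).toReal)
      = fun x => (Real.sqrt (2 * Real.pi))⁻¹ * (x * Real.exp (-(2⁻¹:ℝ) * x^2)) := by
    funext x
    rw [gaussianPDF, ENNReal.toReal_ofReal (gaussianPDFReal_nonneg 0 1 x)]
    simp only [gaussianPDFReal]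
    push_cast
    rw [mul_one]
    ring_nf
  rw [h2]
  exact h1.const_mul _

lemma my_integral_id_gauss : ∫ x, x ∂(gaussianReal 0 1) = 0 := by
  have hmap : Measure.map (fun x : ℝ => -1 * x) (gaussianReal 0 1) = gaussianReal 0 1 := by
    have := gaussianReal_map_const_mul (μ := 0) (v := 1) (-1)
    simpa using this
  have h1 : ∫ x, x ∂(gaussianReal 0 1)
      = ∫ x, x ∂(Measure.map (fun x : ℝ => -1 * x) (gaussianReal 0 1)) := by
    rw [hmap]
  rw [integral_map (φ := fun x : ℝ => -1 * x) (f := fun x : ℝ => x) (by fun_prop)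
    aestronglyMeasurable_id] at h1
  simp only [neg_one_mul] at h1
  have h2 : ∫ (x:ℝ), -x ∂(gaussianReal 0 1) = - ∫ (x:ℝ), x ∂(gaussianReal 0 1) :=
    integral_neg (f := fun x : ℝ => x)
  rw [h2] at h1
  linarith

lemma my_map_eval [DecidableEq ι] (j : ι) :
    Measure.map (fun w : ι → ℝ => w j) (Measure.pi fun _ : ι => gaussianReal 0 1)
      = gaussianReal 0 1 := by
  refine Measure.ext fun s hs => ?_
  rw [Measure.map_apply (measurable_pi_apply j) hs]
  rw [show (fun w : ι → ℝ => w j) ⁻¹' s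
      = Set.univ.pi (Function.update (fun _ : ι => (Set.univ : Set ℝ)) j s) from Set.eval_preimage]
  rw [Measure.pi_pi]
  rw [Finset.prod_eq_single j (fun i _ hij => by
      rw [Function.update_of_ne hij]; exact measure_univ) (fun hj => absurd (Finset.mem_univ j) hj)]
  rw [Function.update_self]

lemma my_integrable_eval [DecidableEq ι] (j : ι) :
    Integrable (fun w : ι → ℝ => w j) (Measure.pi fun _ : ι => gaussianReal 0 1) := by
  have h := (integrable_map_measure (f := fun w : ι → ℝ => w j) (g := fun x : ℝ => x)
    (by rw [my_map_eval j]; exact aestronglyMeasurable_id)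
    (measurable_pi_apply j).aemeasurable).mp
  exact h (by rw [my_map_eval j]; exact my_integrable_id_gauss)

lemma my_integral_eval [DecidableEq ι] (j : ι) :
    ∫ w : ι → ℝ, w j ∂(Measure.pi fun _ : ι => gaussianReal 0 1) = 0 := by
  have h := integral_map (φ := fun w : ι → ℝ => w j) (f := fun x : ℝ => x)
    (measurable_pi_apply j).aemeasurable
    (by rw [my_map_eval j]; exact aestronglyMeasurable_id)
  rw [my_map_eval j] at h
  rw [← h, my_integral_id_gauss]

lemma my_integrable_affine [DecidableEq ι] {d : ℕ} (a : Fin d → ℝ) (C : Matrix (Fin d) ι ℝ) :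
    Integrable (fun w : ι → ℝ => a + C.mulVec w) (Measure.pi fun _ : ι => gaussianReal 0 1) := by
  have hC : C.mulVec
      = fun w : ι → ℝ => ∑ j, (w j) • (fun i => C i j) := by
    funext w
    funext i
    simp [Matrix.mulVec, dotProduct, Finset.sum_apply, mul_comm]
  refine (integrable_const a).add ?_
  rw [hC]
  exact integrable_finset_sum _ fun j _ => (my_integrable_eval j).smul_const _

lemma my_integral_affine [DecidableEq ι] {d : ℕ} (a : Fin d → ℝ) (C : Matrix (Fin d) ι ℝ) :
    ∫ w : ι → ℝ, (a + C.mulVec w) ∂(Measure.pi fun _ : ι => gaussianReal 0 1) = a := by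
  have hC : C.mulVec
      = fun w : ι → ℝ => ∑ j, (w j) • (fun i => C i j) := by
    funext w
    funext i
    simp [Matrix.mulVec, dotProduct, Finset.sum_apply, mul_comm]
  rw [integral_add (integrable_const a) (by
    rw [hC]; exact integrable_finset_sum _ fun j _ => (my_integrable_eval j).smul_const _)]
  rw [integral_const, probReal_univ, one_smul, hC]
  rw [integral_finset_sum _ fun j _ => (my_integrable_eval j).smul_const _]
  have hz : ∀ j : ι, ∫ w : ι → ℝ, (w j) • (fun i => C i j)
      ∂(Measure.pi fun _ : ι => gaussianReal 0 1) = (0 : Fin d → ℝ) := by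
    intro j
    rw [integral_smul_const, my_integral_eval j, zero_smul]
  simp only [hz, Finset.sum_const, smul_zero, add_zero]

end Helpers

section SqrtHelper

open scoped MatrixOrder in
lemma my_psd_factor {d : ℕ} {S : Matrix (Fin d) (Fin d) ℝ} (hS : S.PosSemidef) :
    ∃ C : Matrix (Fin d) (Fin d) ℝ, C * Cᵀ = S := by
  obtain ⟨X, hX⟩ := CStarAlgebra.nonneg_iff_eq_star_mul_self.mp hS.nonneg
  refine ⟨Xᵀ, ?_⟩
  rw [hX, Matrix.transpose_transpose, Matrix.star_eq_conjTranspose,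
    Matrix.conjTranspose_eq_transpose_of_trivial]

end SqrtHelper

/-- **Gaussian comparison for the convex order.**
If `Z` is a standard Gaussian vector on `ℝ^q` and `A, B` are `d × q` real matrices with
`B Bᵀ − A Aᵀ` positive semi-definite, then `A Z` is dominated by `B Z` for the convex order. -/
theorem gaussian_convexOrder_of_posSemidef {d q : ℕ} {Ω : Type*} [MeasurableSpace Ω]
    (P : Measure Ω) [IsProbabilityMeasure P]
    (Z : Ω → Fin q → ℝ) (hZmeas : Measurable Z)
    (hZ : Measure.map Z P = Measure.pi fun _ => gaussianReal 0 1)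
    (A B : Matrix (Fin d) (Fin q) ℝ)
    (hAB : (B * Bᵀ - A * Aᵀ).PosSemidef) :
    ∀ f : (Fin d → ℝ) → ℝ, ConvexOn ℝ Set.univ f →
      Integrable (fun ω => f (A.mulVec (Z ω))) P →
      Integrable (fun ω => f (B.mulVec (Z ω))) P →
      ∫ ω, f (A.mulVec (Z ω)) ∂P ≤ ∫ ω, f (B.mulVec (Z ω)) ∂P := by
  intro f hf hfA hfB
  classical
  have hfc : Continuous f := continuousOn_univ.mp (hf.continuousOn isOpen_univ)
  -- the square root matrix
  obtain ⟨C, hCC⟩ := my_psd_factor hAB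
  set D : Matrix (Fin d) (Fin q ⊕ Fin d) ℝ := Matrix.fromCols A C with hDdef
  set B' : Matrix (Fin d) (Fin q ⊕ Fin d) ℝ :=
    Matrix.fromCols B (0 : Matrix (Fin d) (Fin d) ℝ) with hB'def
  have hDDt : D * Dᵀ = B' * B'ᵀ := by
    rw [hDdef, hB'def, Matrix.transpose_fromCols, Matrix.transpose_fromCols,
      Matrix.fromCols_mul_fromRows, Matrix.fromCols_mul_fromRows, hCC]
    simp
  have hmapeq : Measure.map B'.mulVec (Measure.pi fun _ : Fin q ⊕ Fin d => gaussianReal 0 1) = Measure.map D.mulVec (Measure.pi fun _ : Fin q ⊕ Fin d => gaussianReal 0 1) := my_map_eq D B' hDDt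
  -- the measurable equivalence between the sum-index space and the product
  set e := MeasurableEquiv.sumPiEquivProdPi (fun _ : Fin q ⊕ Fin d => ℝ) with hedef
  have MP : MeasurePreserving e (Measure.pi fun _ : Fin q ⊕ Fin d => gaussianReal 0 1) (((Measure.pi fun _ : Fin q => gaussianReal 0 1).prod (Measure.pi fun _ : Fin d => gaussianReal 0 1))) :=
    measurePreserving_sumPiEquivProdPi (fun _ => gaussianReal 0 1)
  have he_apply : ∀ y : (Fin q ⊕ Fin d) → ℝ,
      e y = (fun i => y (Sum.inl i), fun i => y (Sum.inr i)) := fun _ => rfl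
  have hD : ∀ y : (Fin q ⊕ Fin d) → ℝ,
      D.mulVec y = A.mulVec (fun i => y (Sum.inl i)) + C.mulVec (fun i => y (Sum.inr i)) := by
    intro y
    conv_lhs => rw [show y = Sum.elim (fun i => y (Sum.inl i)) (fun i => y (Sum.inr i)) from
      funext fun s => by cases s <;> rfl]
    rw [hDdef, Matrix.fromCols_mulVec_sumElim]
  have hB'v : ∀ y : (Fin q ⊕ Fin d) → ℝ,
      B'.mulVec y = B.mulVec (fun i => y (Sum.inl i)) := by
    intro y
    conv_lhs => rw [show y = Sum.elim (fun i => y (Sum.inl i)) (fun i => y (Sum.inr i)) from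
      funext fun s => by cases s <;> rfl]
    rw [hB'def, Matrix.fromCols_mulVec_sumElim, Matrix.zero_mulVec, add_zero]
  -- transfer of integrability from Ω to the canonical space
  have hIA : Integrable (fun z => f (A.mulVec z)) (Measure.pi fun _ : Fin q => gaussianReal 0 1) := by
    rw [← hZ]
    exact (integrable_map_measure
      (hfc.comp (my_cont_mulVec A)).aestronglyMeasurable hZmeas.aemeasurable).mpr hfA
  have hIB : Integrable (fun z => f (B.mulVec z)) (Measure.pi fun _ : Fin q => gaussianReal 0 1) := by
    rw [← hZ]
    exact (integrable_map_measure
      (hfc.comp (my_cont_mulVec B)).aestronglyMeasurable hZmeas.aemeasurable).mpr hfB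
  have hIB1 : Integrable (fun p : (Fin q → ℝ) × (Fin d → ℝ) => f (B.mulVec p.1)) (((Measure.pi fun _ : Fin q => gaussianReal 0 1).prod (Measure.pi fun _ : Fin d => gaussianReal 0 1))) := by
    have hfst : Measure.map Prod.fst (((Measure.pi fun _ : Fin q => gaussianReal 0 1).prod (Measure.pi fun _ : Fin d => gaussianReal 0 1))) = (Measure.pi fun _ : Fin q => gaussianReal 0 1) := Measure.fst_prod
    refine (integrable_map_measure (f := (Prod.fst : (Fin q → ℝ) × (Fin d → ℝ) → Fin q → ℝ))
      (g := fun z => f (B.mulVec z)) ?_ measurable_fst.aemeasurable).mp ?_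
    · rw [hfst]; exact (hfc.comp (my_cont_mulVec B)).aestronglyMeasurable
    · rw [hfst]; exact hIB
  have hIB2 : Integrable (fun y => f (B'.mulVec y)) (Measure.pi fun _ : Fin q ⊕ Fin d => gaussianReal 0 1) := by
    have h := (MP.integrable_comp_emb e.measurableEmbedding
      (g := fun p : (Fin q → ℝ) × (Fin d → ℝ) => f (B.mulVec p.1))).mpr hIB1
    refine h.congr (ae_of_all _ fun y => ?_)
    show f (B.mulVec (fun i => y (Sum.inl i))) = f (B'.mulVec y)
    exact (congrArg f (hB'v y)).symm
  have hID : Integrable (fun y => f (D.mulVec y)) (Measure.pi fun _ : Fin q ⊕ Fin d => gaussianReal 0 1) := by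
    have h1 : Integrable f (Measure.map B'.mulVec (Measure.pi fun _ : Fin q ⊕ Fin d => gaussianReal 0 1)) :=
      (integrable_map_measure hfc.aestronglyMeasurable
        (my_meas_mulVec B').aemeasurable).mpr hIB2
    rw [hmapeq] at h1
    exact (integrable_map_measure hfc.aestronglyMeasurable
      (my_meas_mulVec D).aemeasurable).mp h1
  have hIprod : Integrable (fun p : (Fin q → ℝ) × (Fin d → ℝ) =>
      f (A.mulVec p.1 + C.mulVec p.2)) (((Measure.pi fun _ : Fin q => gaussianReal 0 1).prod (Measure.pi fun _ : Fin d => gaussianReal 0 1))) := by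
    refine (MP.integrable_comp_emb e.measurableEmbedding).mp ?_
    refine hID.congr (ae_of_all _ fun y => ?_)
    show f (D.mulVec y)
      = f (A.mulVec (fun i => y (Sum.inl i)) + C.mulVec (fun i => y (Sum.inr i)))
    exact congrArg f (hD y)
  -- integral identities
  have h_int_B' : ∫ y, f (B'.mulVec y) ∂(Measure.pi fun _ : Fin q ⊕ Fin d => gaussianReal 0 1) = ∫ z, f (B.mulVec z) ∂(Measure.pi fun _ : Fin q => gaussianReal 0 1) := by
    have h1 := MP.integral_comp e.measurableEmbedding
      (g := fun p : (Fin q → ℝ) × (Fin d → ℝ) => f (B.mulVec p.1))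
    have h2 : ∫ y, f (B'.mulVec y) ∂(Measure.pi fun _ : Fin q ⊕ Fin d => gaussianReal 0 1)
        = ∫ y, (fun p : (Fin q → ℝ) × (Fin d → ℝ) => f (B.mulVec p.1)) (e y) ∂(Measure.pi fun _ : Fin q ⊕ Fin d => gaussianReal 0 1) := by
      refine integral_congr_ae (ae_of_all _ fun y => ?_)
      exact congrArg f (hB'v y)
    have h3 : ∫ p : (Fin q → ℝ) × (Fin d → ℝ), f (B.mulVec p.1) ∂(((Measure.pi fun _ : Fin q => gaussianReal 0 1).prod (Measure.pi fun _ : Fin d => gaussianReal 0 1)))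
        = ∫ z, f (B.mulVec z) ∂(Measure.pi fun _ : Fin q => gaussianReal 0 1) := by
      have hfst : Measure.map Prod.fst (((Measure.pi fun _ : Fin q => gaussianReal 0 1).prod (Measure.pi fun _ : Fin d => gaussianReal 0 1))) = (Measure.pi fun _ : Fin q => gaussianReal 0 1) := Measure.fst_prod
      rw [← hfst, integral_map measurable_fst.aemeasurable]
      rw [hfst]
      exact (hfc.comp (my_cont_mulVec B)).aestronglyMeasurable
    rw [h2, h1, h3]
  have h_int_law : ∫ y, f (B'.mulVec y) ∂(Measure.pi fun _ : Fin q ⊕ Fin d => gaussianReal 0 1) = ∫ y, f (D.mulVec y) ∂(Measure.pi fun _ : Fin q ⊕ Fin d => gaussianReal 0 1) := by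
    rw [← integral_map (my_meas_mulVec B').aemeasurable hfc.aestronglyMeasurable, hmapeq,
      integral_map (my_meas_mulVec D).aemeasurable hfc.aestronglyMeasurable]
  have h_int_D : ∫ y, f (D.mulVec y) ∂(Measure.pi fun _ : Fin q ⊕ Fin d => gaussianReal 0 1)
      = ∫ z, ∫ w, f (A.mulVec z + C.mulVec w) ∂(Measure.pi fun _ : Fin d => gaussianReal 0 1) ∂(Measure.pi fun _ : Fin q => gaussianReal 0 1) := by
    have h1 := MP.integral_comp e.measurableEmbedding
      (g := fun p : (Fin q → ℝ) × (Fin d → ℝ) => f (A.mulVec p.1 + C.mulVec p.2))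
    have h2 : ∫ y, f (D.mulVec y) ∂(Measure.pi fun _ : Fin q ⊕ Fin d => gaussianReal 0 1)
        = ∫ y, (fun p : (Fin q → ℝ) × (Fin d → ℝ) => f (A.mulVec p.1 + C.mulVec p.2)) (e y) ∂(Measure.pi fun _ : Fin q ⊕ Fin d => gaussianReal 0 1) := by
      refine integral_congr_ae (ae_of_all _ fun y => ?_)
      exact congrArg f (hD y)
    rw [h2, h1, integral_prod _ hIprod]
  -- Jensen's inequality pointwise in `z`
  have hae := hIprod.prod_right_ae
  have hJ : ∀ᵐ z ∂(Measure.pi fun _ : Fin q => gaussianReal 0 1), f (A.mulVec z) ≤ ∫ w, f (A.mulVec z + C.mulVec w) ∂(Measure.pi fun _ : Fin d => gaussianReal 0 1) := by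
    filter_upwards [hae] with z hz
    have hJen := hf.map_integral_le (μ := (Measure.pi fun _ : Fin d => gaussianReal 0 1))
      (f := fun w => A.mulVec z + C.mulVec w)
      (hfc.continuousOn) isClosed_univ (ae_of_all _ fun _ => Set.mem_univ _)
      (my_integrable_affine (A.mulVec z) C) hz
    rwa [my_integral_affine (A.mulVec z) C] at hJen
  have hmono : ∫ z, f (A.mulVec z) ∂(Measure.pi fun _ : Fin q => gaussianReal 0 1)
      ≤ ∫ z, ∫ w, f (A.mulVec z + C.mulVec w) ∂(Measure.pi fun _ : Fin d => gaussianReal 0 1) ∂(Measure.pi fun _ : Fin q => gaussianReal 0 1) :=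
    integral_mono_ae hIA hIprod.integral_prod_left hJ
  -- transfer the integrals back to Ω
  have hPA : ∫ ω, f (A.mulVec (Z ω)) ∂P = ∫ z, f (A.mulVec z) ∂(Measure.pi fun _ : Fin q => gaussianReal 0 1) := by
    rw [← hZ, integral_map hZmeas.aemeasurable]
    rw [hZ]
    exact (hfc.comp (my_cont_mulVec A)).aestronglyMeasurable
  have hPB : ∫ ω, f (B.mulVec (Z ω)) ∂P = ∫ z, f (B.mulVec z) ∂(Measure.pi fun _ : Fin q => gaussianReal 0 1) := by
    rw [← hZ, integral_map hZmeas.aemeasurable]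
    rw [hZ]
    exact (hfc.comp (my_cont_mulVec B)).aestronglyMeasurable
  rw [hPA, hPB]
  calc ∫ z, f (A.mulVec z) ∂(Measure.pi fun _ : Fin q => gaussianReal 0 1)
      ≤ ∫ z, ∫ w, f (A.mulVec z + C.mulVec w) ∂(Measure.pi fun _ : Fin d => gaussianReal 0 1) ∂(Measure.pi fun _ : Fin q => gaussianReal 0 1) := hmono
    _ = ∫ y, f (D.mulVec y) ∂(Measure.pi fun _ : Fin q ⊕ Fin d => gaussianReal 0 1) := h_int_D.symm
    _ = ∫ y, f (B'.mulVec y) ∂(Measure.pi fun _ : Fin q ⊕ Fin d => gaussianReal 0 1) := h_int_law.symm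
    _ = ∫ z, f (B.mulVec z) ∂(Measure.pi fun _ : Fin q => gaussianReal 0 1) := h_int_B'
end

section
/- Let σ, ϑ ∈ ℝ with |σ| ≤ |ϑ|. Then the one-dimensional centered Gaussian distribution N(0, σ²) is dominated by N(0, ϑ²) for the convex order: for every convex function f : ℝ → ℝ integrable with respect to both N(0, σ²) and N(0, ϑ²), one has ∫ f dN(0, σ²) ≤ ∫ f dN(0, ϑ²). -/
open MeasureTheory ProbabilityTheory

/-- **One-dimensional centered Gaussian distributions increase for the convex order with the
absolute value of the standard deviation**: if `|σ| ≤ |ϑ|` then `N(0, σ²) ⪯_cvx N(0, ϑ²)`. -/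
theorem gaussianReal_convexOrder_of_abs_le (σ ϑ : ℝ) (hσϑ : |σ| ≤ |ϑ|) :
    ∀ f : ℝ → ℝ, ConvexOn ℝ Set.univ f →
      Integrable f (gaussianReal 0 (Real.toNNReal (σ ^ 2))) →
      Integrable f (gaussianReal 0 (Real.toNNReal (ϑ ^ 2))) →
      ∫ x, f x ∂(gaussianReal 0 (Real.toNNReal (σ ^ 2))) ≤
        ∫ x, f x ∂(gaussianReal 0 (Real.toNNReal (ϑ ^ 2))) := by
  intro f hf hfσ hfϑ
  by_cases hϑ : ϑ = 0
  · have hσ : σ = 0 := by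
      have := hσϑ
      rw [hϑ] at this
      simpa [abs_nonpos_iff] using this
    rw [hσ, hϑ]
  · set ν := gaussianReal 0 (Real.toNNReal (ϑ ^ 2)) with hν
    set c : ℝ := σ / ϑ with hcdef
    have hcϑ : c * ϑ = σ := div_mul_cancel₀ σ hϑ
    have hc : |c| ≤ 1 := by
      rw [hcdef, abs_div]
      exact div_le_one_of_le₀ hσϑ (abs_nonneg _)
    -- map lemma
    have hmap : ν.map (c * ·) = gaussianReal 0 (Real.toNNReal (σ ^ 2)) := by
      rw [hν, gaussianReal_map_const_mul, mul_zero]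
      congr 1
      ext
      push_cast [Real.coe_toNNReal _ (sq_nonneg ϑ), Real.coe_toNNReal _ (sq_nonneg σ)]
      rw [← hcϑ]; ring
    have hneg : ν.map (fun x => -x) = ν := by
      have := gaussianReal_map_const_mul (μ := 0) (v := Real.toNNReal (ϑ ^ 2)) (-1)
      simp only [neg_one_mul, mul_zero] at this
      rw [hν, this]
      congr 1
      ext
      simp
    have hmeas : Measurable fun x : ℝ => c * x := measurable_const_mul c
    have hnegmeas : Measurable fun x : ℝ => -x := measurable_neg
    -- rewrite LHS
    have hL : ∫ x, f x ∂(gaussianReal 0 (Real.toNNReal (σ ^ 2))) = ∫ x, f (c * x) ∂ν := by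
      rw [← hmap, integral_map hmeas.aemeasurable]
      rw [hmap]
      exact hfσ.1
    have hR : ∫ x, f (-x) ∂ν = ∫ x, f x ∂ν := by
      conv_rhs => rw [← hneg]
      rw [integral_map hnegmeas.aemeasurable]
      rw [hneg]
      exact hfϑ.1
    -- integrability
    have hInt1 : Integrable (fun x => f (c * x)) ν := by
      have := (integrable_map_measure (by rw [hmap]; exact hfσ.1)
        hmeas.aemeasurable).mp (by rw [hmap]; exact hfσ)
      exact this
    have hInt2 : Integrable (fun x => f (-x)) ν := by
      have := (integrable_map_measure (by rw [hneg]; exact hfϑ.1)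
        hnegmeas.aemeasurable).mp (by rw [hneg]; exact hfϑ)
      exact this
    -- pointwise bound
    have hpt : ∀ x, f (c * x) ≤ (1 + c) / 2 * f x + (1 - c) / 2 * f (-x) := by
      intro x
      have h1 : (0:ℝ) ≤ (1 + c) / 2 := by
        have := neg_abs_le c
        linarith [hc]
      have h2 : (0:ℝ) ≤ (1 - c) / 2 := by
        have := le_abs_self c
        linarith [hc]
      have h3 : (1 + c) / 2 + (1 - c) / 2 = 1 := by ring
      have := hf.2 (Set.mem_univ x) (Set.mem_univ (-x)) h1 h2 h3
      simpa [smul_eq_mul, show (1 + c) / 2 * x + -((1 - c) / 2 * x) = c * x by ring] using this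
    calc ∫ x, f x ∂(gaussianReal 0 (Real.toNNReal (σ ^ 2)))
        = ∫ x, f (c * x) ∂ν := hL
      _ ≤ ∫ x, (1 + c) / 2 * f x + (1 - c) / 2 * f (-x) ∂ν := by
          refine integral_mono hInt1 ?_ hpt
          exact (hfϑ.const_mul _).add (hInt2.const_mul _)
      _ = (1 + c) / 2 * ∫ x, f x ∂ν + (1 - c) / 2 * ∫ x, f (-x) ∂ν := by
          rw [integral_add (hfϑ.const_mul _) (hInt2.const_mul _), integral_const_mul,
            integral_const_mul]
      _ = ∫ x, f x ∂ν := by rw [hR]; ring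
end

section
/- Let Z be an integrable ℝ^q-valued random vector with a radial distribution, i.e. O Z has the same law as Z for every orthogonal q×q matrix O, and assume P(Z ≠ 0) > 0. Then for A, B ∈ M_{d,q}(ℝ) the following are equivalent: (i) B Bᵀ − A Aᵀ is symmetric positive semi-definite; (ii) A Z is dominated by B Z for the convex order. -/
open MeasureTheory Matrix


variable {q : ℕ}

/-- `C` is a convex combination of orthogonal matrices. -/
def MixO (C : Matrix (Fin q) (Fin q) ℝ) : Prop :=
  ∃ (ι : Type) (_ : Fintype ι) (w : ι → ℝ) (Q : ι → Matrix (Fin q) (Fin q) ℝ),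
    (∀ i, 0 ≤ w i) ∧ (∑ i, w i) = 1 ∧ (∀ i, Q i * (Q i)ᵀ = 1) ∧ C = ∑ i, w i • Q i

lemma mixO_of_orth {Q : Matrix (Fin q) (Fin q) ℝ} (hQ : Q * Qᵀ = 1) : MixO Q :=
  ⟨Unit, inferInstance, fun _ => 1, fun _ => Q, fun _ => zero_le_one, by simp, fun _ => hQ, by simp⟩

lemma MixO.mul {X Y : Matrix (Fin q) (Fin q) ℝ} (hX : MixO X) (hY : MixO Y) : MixO (X * Y) := by
  obtain ⟨ι, hι, w, Q, hw, hw1, hQ, rfl⟩ := hX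
  obtain ⟨κ, hκ, v, P, hv, hv1, hP, rfl⟩ := hY
  refine ⟨ι × κ, inferInstance, fun p => w p.1 * v p.2, fun p => Q p.1 * P p.2,
    fun p => mul_nonneg (hw _) (hv _), ?_, fun p => ?_, ?_⟩
  · rw [Fintype.sum_prod_type]
    simp_rw [← Finset.mul_sum, hv1, mul_one]; exact hw1
  · rw [Matrix.transpose_mul,
      show Q p.1 * P p.2 * ((P p.2)ᵀ * (Q p.1)ᵀ) = Q p.1 * (P p.2 * (P p.2)ᵀ) * (Q p.1)ᵀ by
        simp [Matrix.mul_assoc],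
      hP, Matrix.mul_one, hQ]
  · rw [Finset.sum_mul_sum, Fintype.sum_prod_type]
    refine Finset.sum_congr rfl fun i _ => Finset.sum_congr rfl fun j _ => ?_
    simp [Matrix.smul_mul, Matrix.mul_smul, smul_smul, mul_comm]

lemma MixO.convexComb {X Y : Matrix (Fin q) (Fin q) ℝ} {p : ℝ} (h0 : 0 ≤ p) (h1 : p ≤ 1)
    (hX : MixO X) (hY : MixO Y) : MixO (p • X + (1 - p) • Y) := by
  obtain ⟨ι, hι, w, Q, hw, hw1, hQ, rfl⟩ := hX
  obtain ⟨κ, hκ, v, P, hv, hv1, hP, rfl⟩ := hY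
  refine ⟨ι ⊕ κ, inferInstance, Sum.elim (fun i => p * w i) (fun j => (1 - p) * v j),
    Sum.elim Q P, ?_, ?_, ?_, ?_⟩
  · rintro (i | j)
    · exact mul_nonneg h0 (hw i)
    · exact mul_nonneg (by linarith) (hv j)
  · rw [Fintype.sum_sum_type]
    simp only [Sum.elim_inl, Sum.elim_inr, ← Finset.mul_sum, hw1, hv1]; ring
  · rintro (i | j) <;> simp [hQ, hP]
  · rw [Fintype.sum_sum_type]
    simp only [Sum.elim_inl, Sum.elim_inr, Finset.smul_sum, smul_smul]

lemma MixO.transpose {X : Matrix (Fin q) (Fin q) ℝ} (hX : MixO X) : MixO Xᵀ := by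
  obtain ⟨ι, hι, w, Q, hw, hw1, hQ, rfl⟩ := hX
  refine ⟨ι, hι, w, fun i => (Q i)ᵀ, hw, hw1, fun i => ?_, ?_⟩
  · rw [Matrix.transpose_transpose, ← mul_eq_one_comm, hQ i]
  · rw [Matrix.transpose_sum]; simp_rw [Matrix.transpose_smul]

/-- a diagonal matrix with entries in [0,1] is a mixture of orthogonal matrices -/
lemma mixO_diagonal {σ : Fin q → ℝ} (h0 : ∀ i, 0 ≤ σ i) (h1 : ∀ i, σ i ≤ 1) :
    MixO (Matrix.diagonal σ) := by
  have key : ∀ S : Finset (Fin q), MixO (Matrix.diagonal (fun j => if j ∈ S then σ j else 1)) := by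
    intro S
    induction S using Finset.induction_on with
    | empty =>
      have : (fun j : Fin q => if j ∈ (∅ : Finset (Fin q)) then σ j else 1)
          = (fun _ => (1:ℝ)) := by funext j; simp
      rw [this, Matrix.diagonal_one]; exact mixO_of_orth (by simp)
    | @insert i S hiS ih =>
      have step : MixO (Matrix.diagonal (fun j => if j = i then σ i else 1)) := by
        have hc : Matrix.diagonal (fun j => if j = i then σ i else 1) =
            ((1 + σ i)/2) • (1 : Matrix (Fin q) (Fin q) ℝ)
              + (1 - (1 + σ i)/2) • Matrix.diagonal (fun j => if j = i then -1 else 1) := by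
          ext j k
          by_cases hjk : j = k
          · subst hjk
            by_cases hj : j = i <;>
              simp [Matrix.add_apply, Matrix.smul_apply, Matrix.diagonal_apply_eq,
                Matrix.one_apply_eq, hj] <;> ring
          · simp [Matrix.add_apply, Matrix.smul_apply, Matrix.diagonal_apply_ne _ hjk,
              Matrix.one_apply_ne hjk]
        rw [hc]
        refine MixO.convexComb (by linarith [h0 i]) (by linarith [h1 i])
          (mixO_of_orth (by simp)) (mixO_of_orth ?_)
        rw [Matrix.diagonal_transpose, Matrix.diagonal_mul_diagonal]
        have : (fun j => (if j = i then (-1:ℝ) else 1) * (if j = i then -1 else 1))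
            = (fun _ => (1:ℝ)) := by
          funext j; by_cases hj : j = i <;> simp [hj]
        rw [this, Matrix.diagonal_one]
      have heq : (fun j => if j ∈ insert i S then σ j else 1)
          = (fun j => (if j = i then σ i else 1) * (if j ∈ S then σ j else 1)) := by
        funext j; simp only [Finset.mem_insert]
        by_cases hj : j = i
        · subst hj; simp [hiS]
        · simp [hj]
      have hmm := Matrix.diagonal_mul_diagonal (fun j => if j = i then σ i else (1:ℝ))
        (fun j => if j ∈ S then σ j else 1)
      rw [heq, ← hmm]
      exact step.mul ih
  have := key Finset.univ
  simpa using this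
lemma dot_mulVec_left {m n : ℕ} (M : Matrix (Fin m) (Fin n) ℝ) (x : Fin n → ℝ) (z : Fin m → ℝ) :
    (M *ᵥ x) ⬝ᵥ z = x ⬝ᵥ (Mᵀ *ᵥ z) := by
  rw [Matrix.dotProduct_mulVec, Matrix.vecMul_transpose]

lemma dot_self_nonneg {n : ℕ} (x : Fin n → ℝ) : 0 ≤ x ⬝ᵥ x :=
  Finset.sum_nonneg fun i _ => mul_self_nonneg _

lemma onb_dot (w : OrthonormalBasis (Fin q) ℝ (EuclideanSpace ℝ (Fin q))) (i j : Fin q) :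
    (w i : Fin q → ℝ) ⬝ᵥ (w j) = if i = j then 1 else 0 := by
  have := orthonormal_iff_ite.mp w.orthonormal i j
  rw [PiLp.inner_apply] at this
  simpa [RCLike.inner_apply, dotProduct, mul_comm] using this

lemma inner_eq_dot (x y : EuclideanSpace ℝ (Fin q)) : inner ℝ x y = (x : Fin q → ℝ) ⬝ᵥ y := by
  rw [PiLp.inner_apply]; simp [RCLike.inner_apply, dotProduct, mul_comm]

lemma onb_matrix_orth (w : OrthonormalBasis (Fin q) ℝ (EuclideanSpace ℝ (Fin q))) :
    (Matrix.of fun j i => w i j)ᵀ * (Matrix.of fun j i => w i j) = 1 := by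
  ext i k
  simp only [Matrix.mul_apply, Matrix.transpose_apply, Matrix.of_apply, Matrix.one_apply]
  simpa [dotProduct] using onb_dot w i k

theorem mixO_of_contraction (C : Matrix (Fin q) (Fin q) ℝ)
    (hC : ∀ v : Fin q → ℝ, (C *ᵥ v) ⬝ᵥ (C *ᵥ v) ≤ v ⬝ᵥ v) : MixO C := by
  classical
  have hG : (Cᵀ * C).IsHermitian := by
    have := Matrix.isHermitian_conjTranspose_mul_self C
    rwa [Matrix.conjTranspose_eq_transpose_of_trivial] at this
  set μ : Fin q → ℝ := hG.eigenvalues with hμdef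
  set v : OrthonormalBasis (Fin q) ℝ (EuclideanSpace ℝ (Fin q)) := hG.eigenvectorBasis with hvdef
  have hkey : ∀ i, (Cᵀ * C) *ᵥ (v i) = μ i • (v i : Fin q → ℝ) := fun i =>
    hG.mulVec_eigenvectorBasis i
  have hwdot : ∀ i j, (C *ᵥ (v i : Fin q → ℝ)) ⬝ᵥ (C *ᵥ (v j)) = if i = j then μ i else 0 := by
    intro i j
    rw [dot_mulVec_left, Matrix.mulVec_mulVec, hkey j, dotProduct_smul, smul_eq_mul,
      onb_dot v i j]
    by_cases h : i = j <;> simp [h]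
  have hμ0 : ∀ i, 0 ≤ μ i := by
    intro i
    have h := hwdot i i; simp at h
    rw [← h]; exact dot_self_nonneg _
  have hμ1 : ∀ i, μ i ≤ 1 := by
    intro i
    have h := hwdot i i; simp at h
    have h2 := hC (v i)
    rw [h] at h2
    have h3 := onb_dot v i i; simp at h3
    rwa [h3] at h2
  set σ : Fin q → ℝ := fun i => Real.sqrt (μ i) with hσdef
  have hσ0 : ∀ i, 0 ≤ σ i := fun i => Real.sqrt_nonneg _
  have hσ1 : ∀ i, σ i ≤ 1 := fun i => Real.sqrt_le_one.mpr (hμ1 i)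
  have hσsq : ∀ i, σ i * σ i = μ i := fun i => Real.mul_self_sqrt (hμ0 i)
  set s : Set (Fin q) := {i | μ i ≠ 0} with hsdef
  set u0 : Fin q → EuclideanSpace ℝ (Fin q) :=
    fun i => (σ i)⁻¹ • ((WithLp.equiv 2 (Fin q → ℝ)).symm (C *ᵥ (v i))) with hu0def
  have hu0on : Orthonormal ℝ (s.restrict u0) := by
    rw [orthonormal_iff_ite]
    intro i j
    have h1 : inner ℝ (s.restrict u0 i) (s.restrict u0 j)
        = (σ i.1)⁻¹ * ((σ j.1)⁻¹ * ((C *ᵥ (v i.1 : Fin q → ℝ)) ⬝ᵥ (C *ᵥ (v j.1)))) := by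
      show inner ℝ (u0 i.1) (u0 j.1) = _
      simp only [Set.restrict_apply, hu0def]
      rw [real_inner_smul_left, real_inner_smul_right, inner_eq_dot]
      simp [dotProduct]
    rw [h1, hwdot i.1 j.1]
    by_cases h : i = j
    · subst h
      have hμne : μ i.1 ≠ 0 := i.2
      have hσne : σ i.1 ≠ 0 := Real.sqrt_ne_zero'.mpr (lt_of_le_of_ne (hμ0 i.1) (Ne.symm hμne))
      rw [if_pos rfl, if_pos rfl, ← hσsq i.1,
        show (σ i.1)⁻¹ * ((σ i.1)⁻¹ * (σ i.1 * σ i.1))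
          = ((σ i.1)⁻¹ * σ i.1) * ((σ i.1)⁻¹ * σ i.1) by ring,
        inv_mul_cancel₀ hσne, one_mul]
    · have hne' : (i.1 : Fin q) ≠ j.1 := fun hc => h (Subtype.ext hc)
      simp [hne', h]
  obtain ⟨b, hb⟩ := hu0on.exists_orthonormalBasis_extension_of_card_eq
    (by simp [finrank_euclideanSpace])
  have hCb : ∀ i, C *ᵥ (v i : Fin q → ℝ) = σ i • (b i : Fin q → ℝ) := by
    intro i
    by_cases hi : i ∈ s
    · rw [hb i hi]
      have hμne : μ i ≠ 0 := hi
      have hσne : σ i ≠ 0 := Real.sqrt_ne_zero'.mpr (lt_of_le_of_ne (hμ0 i) (Ne.symm hμne))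
      funext j
      show (C *ᵥ (v i : Fin q → ℝ)) j = σ i * ((σ i)⁻¹ * (C *ᵥ (v i : Fin q → ℝ)) j)
      rw [← mul_assoc, mul_inv_cancel₀ hσne, one_mul]
    · have hμz : μ i = 0 := not_not.mp hi
      have hz : C *ᵥ (v i : Fin q → ℝ) = 0 := by
        have h := hwdot i i; simp only [if_pos rfl, hμz] at h
        exact dotProduct_self_eq_zero.mp h
      have hσz : σ i = 0 := by simp [hσdef, hμz]
      rw [hz, hσz, zero_smul]
  -- matrices of the bases
  set Vm : Matrix (Fin q) (Fin q) ℝ := Matrix.of fun j i => v i j with hVmdef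
  set Bm : Matrix (Fin q) (Fin q) ℝ := Matrix.of fun j i => b i j with hBmdef
  have hVo : Vmᵀ * Vm = 1 := onb_matrix_orth v
  have hBo : Bmᵀ * Bm = 1 := onb_matrix_orth b
  have hVo' : Vm * Vmᵀ = 1 := mul_eq_one_comm.mp hVo
  have hBo' : Bm * Bmᵀ = 1 := mul_eq_one_comm.mp hBo
  have hCV : C * Vm = Bm * Matrix.diagonal σ := by
    ext j i
    rw [Matrix.mul_diagonal]
    have h1 : (C * Vm) j i = (C *ᵥ (v i : Fin q → ℝ)) j := by
      simp [Matrix.mul_apply, Matrix.mulVec, dotProduct, hVmdef]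
    rw [h1, hCb i]
    exact mul_comm (σ i) (b i j)
  have hCeq : C = Bm * Matrix.diagonal σ * Vmᵀ := by
    calc C = C * (Vm * Vmᵀ) := by rw [hVo', Matrix.mul_one]
    _ = (C * Vm) * Vmᵀ := by rw [Matrix.mul_assoc]
    _ = Bm * Matrix.diagonal σ * Vmᵀ := by rw [hCV]
  rw [hCeq, Matrix.mul_assoc]
  exact (mixO_of_orth hBo').mul ((mixO_diagonal hσ0 hσ1).mul
    (mixO_of_orth (by rw [Matrix.transpose_transpose, hVo])))

lemma ext_mulVec {m n : ℕ} {X Y : Matrix (Fin m) (Fin n) ℝ} (hXY : ∀ x, X *ᵥ x = Y *ᵥ x) :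
    X = Y := by
  ext i j
  have := congrFun (hXY (Pi.single j 1)) i
  simpa [Matrix.mulVec_single] using this

theorem douglas {d q : ℕ} (A B : Matrix (Fin d) (Fin q) ℝ)
    (h : ∀ x : Fin d → ℝ, (Aᵀ *ᵥ x) ⬝ᵥ (Aᵀ *ᵥ x) ≤ (Bᵀ *ᵥ x) ⬝ᵥ (Bᵀ *ᵥ x)) :
    ∃ C : Matrix (Fin q) (Fin q) ℝ,
      (∀ v : Fin q → ℝ, (Cᵀ *ᵥ v) ⬝ᵥ (Cᵀ *ᵥ v) ≤ v ⬝ᵥ v) ∧ A = B * C := by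
  classical
  set La : EuclideanSpace ℝ (Fin d) →ₗ[ℝ] EuclideanSpace ℝ (Fin q) :=
    Matrix.toEuclideanLin Aᵀ with hLadef
  set Lb : EuclideanSpace ℝ (Fin d) →ₗ[ℝ] EuclideanSpace ℝ (Fin q) :=
    Matrix.toEuclideanLin Bᵀ with hLbdef
  have hLa : ∀ x : EuclideanSpace ℝ (Fin d), (La x : Fin q → ℝ) = Aᵀ *ᵥ x := fun _ => rfl
  have hLb : ∀ x : EuclideanSpace ℝ (Fin d), (Lb x : Fin q → ℝ) = Bᵀ *ᵥ x := fun _ => rfl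
  have hnorm : ∀ x, ‖La x‖ ≤ ‖Lb x‖ := by
    intro x
    rw [norm_eq_sqrt_real_inner (La x), norm_eq_sqrt_real_inner (Lb x)]
    apply Real.sqrt_le_sqrt
    rw [inner_eq_dot, inner_eq_dot, hLa, hLb]
    exact h x
  have hker : LinearMap.ker Lb ≤ LinearMap.ker La := by
    intro x hx
    rw [LinearMap.mem_ker] at hx ⊢
    have := hnorm x
    rw [hx, norm_zero] at this
    exact norm_le_zero_iff.mp this
  set T : EuclideanSpace ℝ (Fin q) →ₗ[ℝ] EuclideanSpace ℝ (Fin q) :=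
    ((LinearMap.ker Lb).liftQ La hker).comp
      ((Lb.quotKerEquivRange).symm.toLinearMap.comp
        (Submodule.orthogonalProjectionOnto (LinearMap.range Lb)).toLinearMap) with hTdef
  have hT1 : ∀ x, T (Lb x) = La x := by
    intro x
    have hmem : Lb x ∈ LinearMap.range Lb := ⟨x, rfl⟩
    have hproj : Submodule.orthogonalProjectionOnto (LinearMap.range Lb) (Lb x) = ⟨Lb x, hmem⟩ :=
      Submodule.orthogonalProjectionOnto_mem_subspace_eq_self ⟨Lb x, hmem⟩
    have hsymm : (Lb.quotKerEquivRange).symm ⟨Lb x, hmem⟩ = Submodule.Quotient.mk x := by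
      rw [LinearEquiv.symm_apply_eq]
      exact Subtype.ext (Lb.quotKerEquivRange_apply_mk x).symm
    simp only [hTdef, LinearMap.comp_apply, ContinuousLinearMap.coe_coe,
      LinearEquiv.coe_coe]
    rw [hproj, hsymm, Submodule.liftQ_apply]
  have hTnorm : ∀ y, ‖T y‖ ≤ ‖y‖ := by
    intro y
    obtain ⟨x, hx⟩ := (Submodule.orthogonalProjectionOnto (LinearMap.range Lb) y).2
    have hsymm : (Lb.quotKerEquivRange).symm (Submodule.orthogonalProjectionOnto (LinearMap.range Lb) y)
        = Submodule.Quotient.mk x := by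
      rw [LinearEquiv.symm_apply_eq]
      refine Subtype.ext ?_
      rw [Lb.quotKerEquivRange_apply_mk x]
      exact hx.symm
    have hTy : T y = La x := by
      simp only [hTdef, LinearMap.comp_apply, ContinuousLinearMap.coe_coe, LinearEquiv.coe_coe]
      rw [hsymm, Submodule.liftQ_apply]
    rw [hTy]
    calc ‖La x‖ ≤ ‖Lb x‖ := hnorm x
    _ = ‖(Submodule.orthogonalProjectionOnto (LinearMap.range Lb) y : EuclideanSpace ℝ (Fin q))‖ := by rw [hx]
    _ ≤ ‖y‖ := by
        calc ‖(Submodule.orthogonalProjectionOnto (LinearMap.range Lb) y : EuclideanSpace ℝ (Fin q))‖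
            = ‖Submodule.orthogonalProjectionOnto (LinearMap.range Lb) y‖ := rfl
        _ ≤ ‖Submodule.orthogonalProjectionOnto (LinearMap.range Lb)‖ * ‖y‖ :=
            (Submodule.orthogonalProjectionOnto (LinearMap.range Lb)).le_opNorm y
        _ ≤ 1 * ‖y‖ := by
            gcongr; exact Submodule.orthogonalProjectionOnto_norm_le _
        _ = ‖y‖ := one_mul _
  set M : Matrix (Fin q) (Fin q) ℝ := Matrix.toEuclideanLin.symm T with hMdef
  have hM : Matrix.toEuclideanLin M = T := LinearEquiv.apply_symm_apply _ T
  have hMv : ∀ x : EuclideanSpace ℝ (Fin q), (M *ᵥ (x : Fin q → ℝ) : Fin q → ℝ) = T x := by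
    intro x
    rw [← hM]; rfl
  refine ⟨Mᵀ, ?_, ?_⟩
  · intro v
    rw [Matrix.transpose_transpose]
    set v' : EuclideanSpace ℝ (Fin q) := (WithLp.equiv 2 (Fin q → ℝ)).symm v with hv'
    have h1 : (M *ᵥ v : Fin q → ℝ) = T v' := hMv v'
    have h2 : (M *ᵥ v) ⬝ᵥ (M *ᵥ v) = inner ℝ (T v') (T v') := by
      rw [inner_eq_dot, ← h1]
    have h3 : v ⬝ᵥ v = inner ℝ v' v' := (inner_eq_dot v' v').symm
    rw [h2, h3, real_inner_self_eq_norm_sq, real_inner_self_eq_norm_sq]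
    exact pow_le_pow_left₀ (norm_nonneg _) (hTnorm v') 2
  · have hAT : Aᵀ = M * Bᵀ := by
      apply ext_mulVec
      intro x
      calc Aᵀ *ᵥ x = La (WithLp.toLp 2 x) := (hLa _).symm
      _ = T (Lb (WithLp.toLp 2 x)) := by rw [hT1]
      _ = M *ᵥ (Bᵀ *ᵥ x) := by rw [← hMv (Lb (WithLp.toLp 2 x)), hLb]
      _ = (M * Bᵀ) *ᵥ x := by rw [Matrix.mulVec_mulVec]
    calc A = (Aᵀ)ᵀ := (Matrix.transpose_transpose A).symm
    _ = (M * Bᵀ)ᵀ := by rw [hAT]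
    _ = B * Mᵀ := by rw [Matrix.transpose_mul, Matrix.transpose_transpose]

lemma sum_mulVec' {ι : Type} [Fintype ι] {m n : ℕ} (M : ι → Matrix (Fin m) (Fin n) ℝ)
    (x : Fin n → ℝ) : (∑ i, M i) *ᵥ x = ∑ i, (M i) *ᵥ x := by
  funext j
  rw [Finset.sum_apply]
  simp only [Matrix.mulVec, dotProduct, Finset.sum_apply, Matrix.sum_apply,
    Finset.sum_mul]
  rw [Finset.sum_comm]

lemma dot_gram {d q : ℕ} (B : Matrix (Fin d) (Fin q) ℝ) (x : Fin d → ℝ) :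
    x ⬝ᵥ ((B * Bᵀ) *ᵥ x) = (Bᵀ *ᵥ x) ⬝ᵥ (Bᵀ *ᵥ x) := by
  rw [← Matrix.mulVec_mulVec, dotProduct_comm, dot_mulVec_left]

/-- linear functional `z ↦ z ⬝ᵥ u` as a continuous linear map -/
noncomputable def dotCLM {n : ℕ} (u : Fin n → ℝ) : (Fin n → ℝ) →L[ℝ] ℝ :=
  LinearMap.toContinuousLinearMap
    { toFun := fun z => z ⬝ᵥ u
      map_add' := fun a b => add_dotProduct a b u
      map_smul' := fun c a => by simp [smul_dotProduct] }

@[simp] lemma dotCLM_apply {n : ℕ} (u : Fin n → ℝ) (z : Fin n → ℝ) : dotCLM u z = z ⬝ᵥ u := rfl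

lemma continuous_mulVecFun {m n : ℕ} (M : Matrix (Fin m) (Fin n) ℝ) :
    Continuous fun x : Fin n → ℝ => M *ᵥ x := by
  apply continuous_pi
  intro i
  show Continuous fun x : Fin n → ℝ => ∑ j, M i j * x j
  exact continuous_finset_sum _ fun j _ => continuous_const.mul (continuous_apply j)

theorem exists_orth_mixture {d q : ℕ} (A B : Matrix (Fin d) (Fin q) ℝ)
    (h : (B * Bᵀ - A * Aᵀ).PosSemidef) :
    ∃ (ι : Type) (_ : Fintype ι) (w : ι → ℝ) (Q : ι → Matrix (Fin q) (Fin q) ℝ),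
      (∀ i, 0 ≤ w i) ∧ (∑ i, w i) = 1 ∧ (∀ i, Q i * (Q i)ᵀ = 1)
        ∧ A = ∑ i, w i • (B * Q i) := by
  have hdot : ∀ x : Fin d → ℝ, (Aᵀ *ᵥ x) ⬝ᵥ (Aᵀ *ᵥ x) ≤ (Bᵀ *ᵥ x) ⬝ᵥ (Bᵀ *ᵥ x) := by
    intro x
    have h2 := (Matrix.posSemidef_iff_dotProduct_mulVec.mp h).2 x
    have hst : star x = x := funext fun i => star_trivial (x i)
    rw [hst, Matrix.sub_mulVec, dotProduct_sub, dot_gram, dot_gram, sub_nonneg] at h2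
    exact h2
  obtain ⟨C, hCcon, hACB⟩ := douglas A B hdot
  have hmix : MixO C := by
    have := (mixO_of_contraction Cᵀ hCcon).transpose
    rwa [Matrix.transpose_transpose] at this
  obtain ⟨ι, hι, w, Q, hw, hw1, hQ, hCsum⟩ := hmix
  refine ⟨ι, hι, w, Q, hw, hw1, hQ, ?_⟩
  rw [hACB, hCsum, Matrix.mul_sum]
  exact Finset.sum_congr rfl fun i _ => (Matrix.mul_smul _ _ _)

theorem radial_convexOrder_iff_posSemidef' {d q : ℕ} {Ω : Type*} [MeasurableSpace Ω]
    (P : Measure Ω) [IsProbabilityMeasure P]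
    (Z : Ω → Fin q → ℝ) (hZmeas : Measurable Z) (hZint : Integrable Z P)
    (hrad : ∀ O : Matrix (Fin q) (Fin q) ℝ, O * Oᵀ = 1 →
      Measure.map (fun ω => O.mulVec (Z ω)) P = Measure.map Z P)
    (hne : 0 < P {ω | Z ω ≠ 0})
    (A B : Matrix (Fin d) (Fin q) ℝ) :
    (B * Bᵀ - A * Aᵀ).PosSemidef ↔
      ∀ f : (Fin d → ℝ) → ℝ, ConvexOn ℝ Set.univ f →
        Integrable (fun ω => f (A.mulVec (Z ω))) P →
        Integrable (fun ω => f (B.mulVec (Z ω))) P →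
        ∫ ω, f (A.mulVec (Z ω)) ∂P ≤ ∫ ω, f (B.mulVec (Z ω)) ∂P := by
  classical
  constructor
  · -- forward direction
    intro hPSD f hf hintA hintB
    obtain ⟨ι, hι, w, Q, hw, hw1, hQ, hAsum⟩ := exists_orth_mixture A B hPSD
    have hfc : Continuous f := continuousOn_univ.mp (hf.continuousOn isOpen_univ)
    have hg : Continuous fun z : Fin q → ℝ => f (B *ᵥ z) := hfc.comp (continuous_mulVecFun B)
    have hφmeas : ∀ i : ι, Measurable fun ω => (Q i) *ᵥ (Z ω) :=
      fun i => ((continuous_mulVecFun (Q i)).measurable).comp hZmeas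
    have key : ∀ i : ι, (∫ ω, f ((B * Q i) *ᵥ (Z ω)) ∂P = ∫ ω, f (B *ᵥ (Z ω)) ∂P)
        ∧ Integrable (fun ω => f ((B * Q i) *ᵥ (Z ω))) P := by
      intro i
      have hmapeq := hrad (Q i) (hQ i)
      have e1 : (fun ω => f ((B * Q i) *ᵥ (Z ω))) = fun ω => f (B *ᵥ ((Q i) *ᵥ (Z ω))) := by
        funext ω; rw [Matrix.mulVec_mulVec]
      constructor
      · rw [e1]
        have i1 : ∫ ω, f (B *ᵥ ((Q i) *ᵥ (Z ω))) ∂P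
            = ∫ z, f (B *ᵥ z) ∂(Measure.map (fun ω => (Q i) *ᵥ (Z ω)) P) :=
          (integral_map (hφmeas i).aemeasurable hg.aestronglyMeasurable).symm
        have i2 : ∫ z, f (B *ᵥ z) ∂(Measure.map Z P) = ∫ ω, f (B *ᵥ (Z ω)) ∂P :=
          integral_map hZmeas.aemeasurable hg.aestronglyMeasurable
        rw [i1, hmapeq, i2]
      · rw [e1]
        have j1 : Integrable (fun z => f (B *ᵥ z)) (Measure.map Z P) :=
          (integrable_map_measure hg.aestronglyMeasurable hZmeas.aemeasurable).mpr hintB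
        have j2 : Integrable (fun z => f (B *ᵥ z))
            (Measure.map (fun ω => (Q i) *ᵥ (Z ω)) P) := by rwa [hmapeq]
        exact (integrable_map_measure hg.aestronglyMeasurable (hφmeas i).aemeasurable).mp j2
    have jensen : ∀ ω, f (A *ᵥ (Z ω)) ≤ ∑ i, w i * f ((B * Q i) *ᵥ (Z ω)) := by
      intro ω
      have hexp : A *ᵥ (Z ω) = ∑ i, w i • ((B * Q i) *ᵥ (Z ω)) := by
        rw [hAsum, sum_mulVec']
        exact Finset.sum_congr rfl fun i _ => Matrix.smul_mulVec _ _ _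
      rw [hexp]
      have := hf.map_sum_le (p := fun i => (B * Q i) *ᵥ Z ω) (fun i _ => hw i) hw1
        (fun i _ => Set.mem_univ _)
      simpa [smul_eq_mul] using this
    have hint_sum : Integrable (fun ω => ∑ i, w i * f ((B * Q i) *ᵥ (Z ω))) P :=
      integrable_finset_sum _ fun i _ => ((key i).2.const_mul _)
    calc ∫ ω, f (A *ᵥ Z ω) ∂P ≤ ∫ ω, ∑ i, w i * f ((B * Q i) *ᵥ (Z ω)) ∂P :=
        integral_mono hintA hint_sum jensen
    _ = ∑ i, w i * ∫ ω, f ((B * Q i) *ᵥ (Z ω)) ∂P := by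
        rw [integral_finset_sum _ (fun i _ => ((key i).2.const_mul _))]
        exact Finset.sum_congr rfl fun i _ => integral_const_mul _ _
    _ = ∑ i, w i * ∫ ω, f (B *ᵥ Z ω) ∂P :=
        Finset.sum_congr rfl fun i _ => by rw [(key i).1]
    _ = ∫ ω, f (B *ᵥ Z ω) ∂P := by rw [← Finset.sum_mul, hw1, one_mul]
  · -- reverse direction
    intro hcvx
    rcases Nat.eq_zero_or_pos q with hq | hq
    · exfalso
      subst hq
      have hempty : {ω | Z ω ≠ 0} = ∅ := by
        ext ω; simp [Subsingleton.elim (Z ω) 0]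
      rw [hempty] at hne
      simp at hne
    set i₀ : Fin q := ⟨0, hq⟩ with hi₀
    set c : ℝ := ∫ ω, |Z ω i₀| ∂P with hcdef
    have hint_dot : ∀ u : Fin q → ℝ, Integrable (fun ω => |Z ω ⬝ᵥ u|) P := by
      intro u
      have := ((dotCLM u).integrable_comp hZint).abs
      simpa using this
    have hrad_abs : ∀ u : Fin q → ℝ, ∫ ω, |Z ω ⬝ᵥ u| ∂P = Real.sqrt (u ⬝ᵥ u) * c := by
      intro u
      by_cases hu : u = 0
      · subst hu
        simp [dotProduct_zero]
      · have hud : 0 < u ⬝ᵥ u :=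
          lt_of_le_of_ne (dot_self_nonneg u)
            (fun hc => hu (dotProduct_self_eq_zero.mp hc.symm))
        set r : ℝ := Real.sqrt (u ⬝ᵥ u) with hrdef
        have hr : 0 < r := Real.sqrt_pos.mpr hud
        have hrr : r * r = u ⬝ᵥ u := Real.mul_self_sqrt hud.le
        set u' : EuclideanSpace ℝ (Fin q) := (WithLp.equiv 2 (Fin q → ℝ)).symm (r⁻¹ • u)
          with hu'def
        have hinner1 : inner ℝ u' u' = 1 := by
          rw [inner_eq_dot]
          show (r⁻¹ • u) ⬝ᵥ (r⁻¹ • u) = 1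
          rw [smul_dotProduct, dotProduct_smul, smul_eq_mul, smul_eq_mul, ← hrr]
          field_simp
        have hon : Orthonormal ℝ (({i₀} : Set (Fin q)).restrict (fun _ => u')) := by
          rw [orthonormal_iff_ite]
          intro i j
          have hij : i = j := Subtype.ext (by rw [i.2, j.2])
          subst hij
          rw [if_pos rfl]; exact hinner1
        obtain ⟨b, hb⟩ := hon.exists_orthonormalBasis_extension_of_card_eq
          (by simp [finrank_euclideanSpace])
        have hbi₀ : b i₀ = u' := hb i₀ rfl
        set Bm : Matrix (Fin q) (Fin q) ℝ := Matrix.of fun j i => b i j with hBmdef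
        have hBo : Bmᵀ * Bm = 1 := onb_matrix_orth b
        have hBo' : Bm * Bmᵀ = 1 := mul_eq_one_comm.mp hBo
        have hmapeq := hrad Bm hBo'
        have hgc : Continuous fun z : Fin q → ℝ => |z ⬝ᵥ u| := ((dotCLM u).continuous).abs
        have hφmeas : Measurable fun ω => Bm *ᵥ (Z ω) :=
          (continuous_mulVecFun Bm).measurable.comp hZmeas
        have e1 : ∫ ω, |Z ω ⬝ᵥ u| ∂P = ∫ ω, |(Bm *ᵥ Z ω) ⬝ᵥ u| ∂P := by
          have i1 : ∫ z, |z ⬝ᵥ u| ∂(Measure.map Z P) = ∫ ω, |Z ω ⬝ᵥ u| ∂P :=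
            integral_map hZmeas.aemeasurable hgc.aestronglyMeasurable
          have i2 : ∫ z, |z ⬝ᵥ u| ∂(Measure.map (fun ω => Bm *ᵥ (Z ω)) P)
              = ∫ ω, |(Bm *ᵥ Z ω) ⬝ᵥ u| ∂P :=
            integral_map hφmeas.aemeasurable hgc.aestronglyMeasurable
          rw [← i1, ← hmapeq, i2]
        have hBu : Bmᵀ *ᵥ u = fun k => r * (if k = i₀ then 1 else 0) := by
          funext k
          have h1 : (Bmᵀ *ᵥ u) k = (b k : Fin q → ℝ) ⬝ᵥ u := by
            simp [Matrix.mulVec, dotProduct, Matrix.transpose_apply, hBmdef]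
          have h2 : u = r • ((b i₀ : Fin q → ℝ)) := by
            rw [hbi₀]
            funext j
            show u j = r * (r⁻¹ * u j)
            rw [← mul_assoc, mul_inv_cancel₀ hr.ne', one_mul]
          rw [h1]
          conv_lhs => rw [h2]
          rw [dotProduct_smul, smul_eq_mul, onb_dot b k i₀]
        have hsingle : (fun k : Fin q => r * (if k = i₀ then 1 else 0))
            = r • (Pi.single i₀ (1:ℝ) : Fin q → ℝ) := by
          funext k
          by_cases hk : k = i₀ <;> simp [Pi.single_apply, hk]
        have e2 : ∀ z : Fin q → ℝ, (Bm *ᵥ z) ⬝ᵥ u = r * z i₀ := by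
          intro z
          rw [dot_mulVec_left, hBu, hsingle, dotProduct_smul, smul_eq_mul,
            dotProduct_single, mul_one]
        calc ∫ ω, |Z ω ⬝ᵥ u| ∂P = ∫ ω, |(Bm *ᵥ Z ω) ⬝ᵥ u| ∂P := e1
        _ = ∫ ω, r * |Z ω i₀| ∂P := by
            congr 1; funext ω; rw [e2, abs_mul, abs_of_pos hr]
        _ = r * c := by rw [integral_const_mul]
    have hc0 : 0 ≤ c := integral_nonneg fun ω => abs_nonneg _
    have hcpos : 0 < c := by
      rcases hc0.lt_or_eq with hlt | heq0
      · exact hlt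
      · exfalso
        have hZ0 : ∀ j : Fin q, ∀ᵐ ω ∂P, Z ω j = 0 := by
          intro j
          have h1 := hrad_abs (Pi.single j (1:ℝ))
          have hdot1 : (Pi.single j (1:ℝ)) ⬝ᵥ (Pi.single j (1:ℝ)) = 1 := by
            rw [dotProduct_single]; simp
          have heq : (fun ω => |Z ω ⬝ᵥ Pi.single j (1:ℝ)|) = fun ω => |Z ω j| := by
            funext ω; rw [dotProduct_single, mul_one]
          rw [hdot1, Real.sqrt_one, one_mul, ← heq0, heq] at h1
          have hint : Integrable (fun ω => |Z ω j|) P := by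
            have := hint_dot (Pi.single j (1:ℝ)); rwa [heq] at this
          have hae := (integral_eq_zero_iff_of_nonneg (fun ω => abs_nonneg _) hint).mp h1
          filter_upwards [hae] with ω hω
          exact abs_eq_zero.mp hω
        have hall : ∀ᵐ ω ∂P, Z ω = 0 := by
          filter_upwards [ae_all_iff.mpr hZ0] with ω hω
          funext j; exact hω j
        exact absurd (ae_iff.mp hall) hne.ne'
    refine Matrix.posSemidef_iff_dotProduct_mulVec.mpr ⟨?_, ?_⟩
    · have h1 : (B * Bᵀ).IsHermitian := by
        have := Matrix.isHermitian_mul_conjTranspose_self B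
        rwa [Matrix.conjTranspose_eq_transpose_of_trivial] at this
      have h2 : (A * Aᵀ).IsHermitian := by
        have := Matrix.isHermitian_mul_conjTranspose_self A
        rwa [Matrix.conjTranspose_eq_transpose_of_trivial] at this
      exact h1.sub h2
    · intro x
      have hst : star x = x := funext fun i => star_trivial (x i)
      rw [hst, Matrix.sub_mulVec, dotProduct_sub, dot_gram, dot_gram, sub_nonneg]
      have hfabs : ConvexOn ℝ Set.univ (fun y : Fin d → ℝ => |y ⬝ᵥ x|) := by
        have habs : ConvexOn ℝ Set.univ (fun t : ℝ => |t|) := by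
          exact convexOn_univ_norm (E := ℝ)
        have := habs.comp_linearMap
          ({ toFun := fun y : Fin d → ℝ => y ⬝ᵥ x
             map_add' := fun v w => add_dotProduct v w x
             map_smul' := fun cc v => by simp [smul_dotProduct] } : (Fin d → ℝ) →ₗ[ℝ] ℝ)
        exact this
      have heqA : (fun ω => |(A *ᵥ (Z ω)) ⬝ᵥ x|) = fun ω => |Z ω ⬝ᵥ (Aᵀ *ᵥ x)| := by
        funext ω; rw [dot_mulVec_left]
      have heqB : (fun ω => |(B *ᵥ (Z ω)) ⬝ᵥ x|) = fun ω => |Z ω ⬝ᵥ (Bᵀ *ᵥ x)| := by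
        funext ω; rw [dot_mulVec_left]
      have hintA' : Integrable (fun ω => |(A *ᵥ (Z ω)) ⬝ᵥ x|) P := by
        rw [heqA]; exact hint_dot _
      have hintB' : Integrable (fun ω => |(B *ᵥ (Z ω)) ⬝ᵥ x|) P := by
        rw [heqB]; exact hint_dot _
      have hkey := hcvx (fun y => |y ⬝ᵥ x|) hfabs hintA' hintB'
      have hA' : ∫ ω, |(A *ᵥ (Z ω)) ⬝ᵥ x| ∂P = Real.sqrt ((Aᵀ *ᵥ x) ⬝ᵥ (Aᵀ *ᵥ x)) * c := by
        rw [heqA]; exact hrad_abs _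
      have hB' : ∫ ω, |(B *ᵥ (Z ω)) ⬝ᵥ x| ∂P = Real.sqrt ((Bᵀ *ᵥ x) ⬝ᵥ (Bᵀ *ᵥ x)) * c := by
        rw [heqB]; exact hrad_abs _
      rw [hA', hB'] at hkey
      have hsq : Real.sqrt ((Aᵀ *ᵥ x) ⬝ᵥ (Aᵀ *ᵥ x)) ≤ Real.sqrt ((Bᵀ *ᵥ x) ⬝ᵥ (Bᵀ *ᵥ x)) :=
        le_of_mul_le_mul_right hkey hcpos
      have hfin := pow_le_pow_left₀ (Real.sqrt_nonneg _) hsq 2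
      rwa [Real.sq_sqrt (dot_self_nonneg _), Real.sq_sqrt (dot_self_nonneg _)] at hfin

/-- **Convex order characterization for radial distributions.**
If `Z` is an integrable `ℝ^q`-valued random vector with a radial distribution
(`O Z ∼ Z` for every orthogonal `O`) and `P(Z ≠ 0) > 0`, then for `d × q` matrices `A, B`,
`B Bᵀ − A Aᵀ` is positive semi-definite iff `A Z ⪯_cvx B Z`. -/
theorem radial_convexOrder_iff_posSemidef {d q : ℕ} {Ω : Type*} [MeasurableSpace Ω]
    (P : Measure Ω) [IsProbabilityMeasure P]
    (Z : Ω → Fin q → ℝ) (hZmeas : Measurable Z) (hZint : Integrable Z P)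
    (hrad : ∀ O : Matrix (Fin q) (Fin q) ℝ, O * Oᵀ = 1 →
      Measure.map (fun ω => O.mulVec (Z ω)) P = Measure.map Z P)
    (hne : 0 < P {ω | Z ω ≠ 0})
    (A B : Matrix (Fin d) (Fin q) ℝ) :
    (B * Bᵀ - A * Aᵀ).PosSemidef ↔
      ∀ f : (Fin d → ℝ) → ℝ, ConvexOn ℝ Set.univ f →
        Integrable (fun ω => f (A.mulVec (Z ω))) P →
        Integrable (fun ω => f (B.mulVec (Z ω))) P →
        ∫ ω, f (A.mulVec (Z ω)) ∂P ≤ ∫ ω, f (B.mulVec (Z ω)) ∂P :=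
  radial_convexOrder_iff_posSemidef' P Z hZmeas hZint hrad hne A B
end

section
/- Let λ_1, …, λ_q : ℝ → ℝ be functions such that each |λ_k| is convex, let A ∈ M_{d,q}(ℝ) and O ∈ O(q, ℝ be an orthogonal q×q matrix. Then the matrix-valued map σ : ℝ → M_{d,q}(ℝ) defined by σ(x) := A · diag(λ_1(x), …, λ_q(x)) · O is ⪯-convex: for every x, y ∈ ℝ and α ∈ [0,1] there exist orthogonal q×q matrices O_{α,x}, O_{α,y} such that (α σ(x) O_{α,x} + (1−α) σ(y) O_{α,y})(α σ(x) O_{α,x} + (1−α) σ(y) O_{α,y})ᵀ − σ(αx+(1−α)y) σ(αx+(1−α)y)ᵀ is positive semi-definite. -/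
open Matrix

/-- **A general class of `⪯`-convex matrix-valued maps.**
If `|λ_k|` is convex for each `k`, `A ∈ M_{d,q}(ℝ)` and `O` is orthogonal, then
`σ(x) = A · diag(λ_1(x), …, λ_q(x)) · O` is `⪯`-convex. -/
theorem sqConvex_of_diag_convex {d q : ℕ}
    (lam : Fin q → ℝ → ℝ) (hlam : ∀ k, ConvexOn ℝ Set.univ fun x => |lam k x|)
    (A : Matrix (Fin d) (Fin q) ℝ)
    (O : Matrix (Fin q) (Fin q) ℝ) (hO : O * Oᵀ = 1)
    (σ : ℝ → Matrix (Fin d) (Fin q) ℝ)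
    (hσ : ∀ x, σ x = A * Matrix.diagonal (fun k => lam k x) * O) :
    ∀ x y : ℝ, ∀ α ∈ Set.Icc (0 : ℝ) 1,
      ∃ O₁ O₂ : Matrix (Fin q) (Fin q) ℝ, O₁ * O₁ᵀ = 1 ∧ O₂ * O₂ᵀ = 1 ∧
        Matrix.PosSemidef
          ((α • (σ x * O₁) + (1 - α) • (σ y * O₂)) *
              (α • (σ x * O₁) + (1 - α) • (σ y * O₂))ᵀ -
            σ (α * x + (1 - α) * y) * (σ (α * x + (1 - α) * y))ᵀ) := by
  intro x y α hα
  obtain ⟨hα0, hα1⟩ := hα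
  have hβ0 : (0:ℝ) ≤ 1 - α := by linarith
  have hO' : Oᵀ * O = 1 := mul_eq_one_comm.mp hO
  -- sign choices
  set s₁ : Fin q → ℝ := fun k => if lam k x < 0 then -1 else 1 with hs₁
  set s₂ : Fin q → ℝ := fun k => if lam k y < 0 then -1 else 1 with hs₂
  have hs₁sq : ∀ k, s₁ k * s₁ k = 1 := by
    intro k; simp only [hs₁]; split <;> norm_num
  have hs₂sq : ∀ k, s₂ k * s₂ k = 1 := by
    intro k; simp only [hs₂]; split <;> norm_num
  have hs₁abs : ∀ k, lam k x * s₁ k = |lam k x| := by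
    intro k; simp only [hs₁]; split
    · rw [abs_of_neg (by assumption)]; ring
    · rw [abs_of_nonneg (by linarith [not_lt.mp (by assumption : ¬ lam k x < 0)])]; ring
  have hs₂abs : ∀ k, lam k y * s₂ k = |lam k y| := by
    intro k; simp only [hs₂]; split
    · rw [abs_of_neg (by assumption)]; ring
    · rw [abs_of_nonneg (by linarith [not_lt.mp (by assumption : ¬ lam k y < 0)])]; ring
  refine ⟨Oᵀ * Matrix.diagonal s₁, Oᵀ * Matrix.diagonal s₂, ?_, ?_, ?_⟩
  · rw [Matrix.transpose_mul, Matrix.diagonal_transpose, Matrix.transpose_transpose,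
      mul_assoc, ← mul_assoc (Matrix.diagonal s₁), Matrix.diagonal_mul_diagonal]
    simp only [hs₁sq]
    rw [show Matrix.diagonal (fun _ : Fin q => (1:ℝ)) = 1 from Matrix.diagonal_one, one_mul, hO']
  · rw [Matrix.transpose_mul, Matrix.diagonal_transpose, Matrix.transpose_transpose,
      mul_assoc, ← mul_assoc (Matrix.diagonal s₂), Matrix.diagonal_mul_diagonal]
    simp only [hs₂sq]
    rw [show Matrix.diagonal (fun _ : Fin q => (1:ℝ)) = 1 from Matrix.diagonal_one, one_mul, hO']
  · -- the combined entries
    set e : Fin q → ℝ := fun k => α * |lam k x| + (1 - α) * |lam k y| with he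
    set z := α * x + (1 - α) * y with hz
    have hσx : σ x * (Oᵀ * Matrix.diagonal s₁) = A * Matrix.diagonal (fun k => |lam k x|) := by
      rw [hσ, Matrix.mul_assoc (A * Matrix.diagonal fun k => lam k x) O,
        ← Matrix.mul_assoc O Oᵀ, hO, one_mul,
        Matrix.mul_assoc A, Matrix.diagonal_mul_diagonal]
      simp only [hs₁abs]
    have hσy : σ y * (Oᵀ * Matrix.diagonal s₂) = A * Matrix.diagonal (fun k => |lam k y|) := by
      rw [hσ, Matrix.mul_assoc (A * Matrix.diagonal fun k => lam k y) O,
        ← Matrix.mul_assoc O Oᵀ, hO, one_mul,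
        Matrix.mul_assoc A, Matrix.diagonal_mul_diagonal]
      simp only [hs₂abs]
    have hdcomb : α • Matrix.diagonal (fun k => |lam k x|)
        + (1 - α) • Matrix.diagonal (fun k => |lam k y|) = Matrix.diagonal e := by
      ext i j
      by_cases hij : i = j
      · subst hij; simp [Matrix.diagonal_apply_eq, he]
      · simp [Matrix.diagonal_apply_ne _ hij, hij]
    have hcomb : α • (σ x * (Oᵀ * Matrix.diagonal s₁)) + (1 - α) • (σ y * (Oᵀ * Matrix.diagonal s₂))
        = A * Matrix.diagonal e := by
      rw [hσx, hσy, ← Matrix.mul_smul, ← Matrix.mul_smul, ← Matrix.mul_add, hdcomb]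
    have hσzz : σ z * (σ z)ᵀ = A * Matrix.diagonal (fun k => lam k z * lam k z) * Aᵀ := by
      rw [hσ, Matrix.transpose_mul, Matrix.transpose_mul, Matrix.diagonal_transpose,
        Matrix.mul_assoc (A * Matrix.diagonal fun k => lam k z) O,
        ← Matrix.mul_assoc O Oᵀ, hO, Matrix.one_mul,
        Matrix.mul_assoc A (Matrix.diagonal fun k => lam k z),
        ← Matrix.mul_assoc (Matrix.diagonal fun k => lam k z)
          (Matrix.diagonal fun k => lam k z) Aᵀ,
        Matrix.diagonal_mul_diagonal, ← Matrix.mul_assoc A]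
    have hAD : (A * Matrix.diagonal e) * (A * Matrix.diagonal e)ᵀ
        = A * Matrix.diagonal (fun k => e k * e k) * Aᵀ := by
      rw [Matrix.transpose_mul, Matrix.diagonal_transpose,
        Matrix.mul_assoc A (Matrix.diagonal e),
        ← Matrix.mul_assoc (Matrix.diagonal e) (Matrix.diagonal e) Aᵀ,
        Matrix.diagonal_mul_diagonal, ← Matrix.mul_assoc A]
    rw [hcomb, hAD, hσzz, ← Matrix.sub_mul, ← Matrix.mul_sub, Matrix.diagonal_sub]
    have hdiag : Matrix.PosSemidef
        (Matrix.diagonal (fun k => e k * e k - lam k z * lam k z)) := by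
      apply Matrix.PosSemidef.diagonal
      intro k
      have hle : |lam k z| ≤ e k := by
        have := (hlam k).2 (Set.mem_univ x) (Set.mem_univ y) hα0 hβ0 (by ring)
        simpa [he, hz, smul_eq_mul] using this
      have h0 : (0:ℝ) ≤ |lam k z| := abs_nonneg _
      have hsq : lam k z * lam k z ≤ e k * e k := by
        calc lam k z * lam k z = |lam k z| * |lam k z| := by rw [← abs_mul_abs_self]
          _ ≤ e k * e k := mul_le_mul hle hle h0 (le_trans h0 hle)
      simpa [sub_nonneg] using hsq
    have hfinal := hdiag.mul_mul_conjTranspose_same A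
    simpa using hfinal
end

section
/- Under the standing assumptions on σ, β, h, λ and s_h, the truncated Euler step is nondecreasing for the stochastic order: for all x ≤ y in ℝ and every bounded nondecreasing Borel function f : ℝ → ℝ, E f(E^h(x, Z̃^h)) ≤ E f(E^h(y, Z̃^h)). -/
open MeasureTheory ProbabilityTheory

/-- **The truncated Euler step is nondecreasing for the stochastic order.**
Under the standing assumptions (`σ ≥ 0` Lipschitz and semi-convex, `β` convex with
`β + c·id` nondecreasing, `2ch < 1`, `λ ∈ (0, 1/(2+√2))`, threshold
`s_h = λ/√(h(L² + a))`), for `x ≤ y` and every bounded nondecreasing Borel `f`,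
`E f(E^h(x, Z̃^h)) ≤ E f(E^h(y, Z̃^h))`. -/
theorem truncatedEuler_stochastic_mono {Ω : Type*} [MeasurableSpace Ω]
    (P : Measure Ω) [IsProbabilityMeasure P]
    (Z : Ω → ℝ) (hZmeas : Measurable Z) (hZ : Measure.map Z P = gaussianReal 0 1)
    (σ β : ℝ → ℝ) (L : ℝ) (hL : 0 < L)
    (hσ0 : ∀ x, 0 ≤ σ x) (hσLip : ∀ x y, |σ x - σ y| ≤ L * |x - y|)
    (a : ℝ) (ha : 0 ≤ a) (hsc : ConvexOn ℝ Set.univ fun x => σ x ^ 2 + a * x ^ 2)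
    (hβ : ConvexOn ℝ Set.univ β)
    (c : ℝ) (hc : 0 ≤ c) (hmono : Monotone fun x => β x + c * x)
    (h : ℝ) (hh : 0 < h) (hch : 2 * c * h < 1)
    (lam : ℝ) (hlam : lam ∈ Set.Ioo 0 (1 / (2 + Real.sqrt 2)))
    (x y : ℝ) (hxy : x ≤ y)
    (f : ℝ → ℝ) (hfmono : Monotone f) (hfmeas : Measurable f)
    (M : ℝ) (hfbdd : ∀ z, |f z| ≤ M) :
    ∫ ω, f (x + h * β x + Real.sqrt h * σ x *
        (if |Z ω| ≤ lam / Real.sqrt (h * (L ^ 2 + a)) then Z ω else 0)) ∂P ≤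
      ∫ ω, f (y + h * β y + Real.sqrt h * σ y *
        (if |Z ω| ≤ lam / Real.sqrt (h * (L ^ 2 + a)) then Z ω else 0)) ∂P := by
  set s : ℝ := lam / Real.sqrt (h * (L ^ 2 + a)) with hs_def
  obtain ⟨hlam0, hlam1⟩ := hlam
  have hK0 : 0 < h * (L ^ 2 + a) := by positivity
  have hK : 0 < Real.sqrt (h * (L ^ 2 + a)) := Real.sqrt_pos.mpr hK0
  have hs0 : 0 ≤ s := le_of_lt (div_pos hlam0 hK)
  -- √h * L ≤ √(h(L²+a))
  have hhL : Real.sqrt h * L ≤ Real.sqrt (h * (L ^ 2 + a)) := by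
    have h1 := Real.sqrt_le_sqrt (show h * L ^ 2 ≤ h * (L ^ 2 + a) by nlinarith)
    rwa [Real.sqrt_mul hh.le, Real.sqrt_sq hL.le] at h1
  -- hence √h * s * L ≤ lam
  have hsL : Real.sqrt h * s * L ≤ lam := by
    rw [hs_def, show Real.sqrt h * (lam / Real.sqrt (h * (L ^ 2 + a))) * L =
      lam * (Real.sqrt h * L / Real.sqrt (h * (L ^ 2 + a))) from by ring]
    have h1 : Real.sqrt h * L / Real.sqrt (h * (L ^ 2 + a)) ≤ 1 := (div_le_one hK).mpr hhL
    nlinarith [div_nonneg (by positivity : (0:ℝ) ≤ Real.sqrt h * L) hK.le]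
  have hlam_half : lam < 1 / 2 := by
    have h2 : (0:ℝ) ≤ Real.sqrt 2 := Real.sqrt_nonneg 2
    have : 1 / (2 + Real.sqrt 2) ≤ 1 / 2 := by
      apply one_div_le_one_div_of_le <;> linarith
    linarith
  -- the key pointwise monotonicity of the truncated Euler map
  have key : ∀ z : ℝ, |z| ≤ s →
      x + h * β x + Real.sqrt h * σ x * z ≤ y + h * β y + Real.sqrt h * σ y * z := by
    intro z hz
    have hβxy : β x + c * x ≤ β y + c * y := hmono hxy
    have hdrift : -(c * (y - x)) ≤ β y - β x := by linarith
    have hσ : |σ y - σ x| ≤ L * (y - x) := by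
      have := hσLip y x
      rwa [abs_of_nonneg (by linarith : (0:ℝ) ≤ y - x)] at this
    have hdiff : |Real.sqrt h * z * (σ y - σ x)| ≤ lam * (y - x) := by
      rw [abs_mul, abs_mul, abs_of_nonneg (Real.sqrt_nonneg h)]
      calc Real.sqrt h * |z| * |σ y - σ x| ≤ Real.sqrt h * s * (L * (y - x)) := by
            apply mul_le_mul _ hσ (abs_nonneg _) (by positivity)
            exact mul_le_mul_of_nonneg_left hz (Real.sqrt_nonneg h)
        _ ≤ lam * (y - x) := by nlinarith
    have h1 : -(lam * (y - x)) ≤ Real.sqrt h * z * (σ y - σ x) :=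
      neg_le_of_abs_le hdiff
    have hch2 : c * h < 1 / 2 := by linarith
    nlinarith [mul_le_mul_of_nonneg_left hdrift hh.le]
  -- measurability / integrability
  have hmeasg : Measurable fun ω => (if |Z ω| ≤ s then Z ω else 0 : ℝ) :=
    Measurable.ite (measurableSet_le hZmeas.abs measurable_const) hZmeas measurable_const
  have hgbd : ∀ ω, |(if |Z ω| ≤ s then Z ω else 0 : ℝ)| ≤ s := by
    intro ω
    by_cases hω : |Z ω| ≤ s
    · simpa [hω]
    · simpa [hω]
  have hint : ∀ u : ℝ, Integrable (fun ω =>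
      f (u + h * β u + Real.sqrt h * σ u * (if |Z ω| ≤ s then Z ω else 0))) P := by
    intro u
    have hm : Measurable fun ω =>
        f (u + h * β u + Real.sqrt h * σ u * (if |Z ω| ≤ s then Z ω else 0)) :=
      hfmeas.comp (measurable_const.add (measurable_const.mul hmeasg))
    refine (integrable_const M).mono' hm.aestronglyMeasurable ?_
    filter_upwards with ω
    simpa using hfbdd _
  refine integral_mono (hint x) (hint y) fun ω => ?_
  exact hfmono (key _ (hgbd ω))
end

section
/- Under the standing assumptions on σ, β, h, λ and s_h, the truncated Euler step is nondecreasing for the increasing convex order: for all x ≤ y in ℝ and every nondecreasing convex function f : ℝ → ℝ, E f(E^h(x, Z̃^h)) ≤ E f(E^h(y, Z̃^h)). -/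
open MeasureTheory ProbabilityTheory

/-- **The truncated Euler step is nondecreasing for the increasing convex order.**
Under the standing assumptions (`σ ≥ 0` Lipschitz and semi-convex, `β` convex with
`β + c·id` nondecreasing, `2ch < 1`, `λ ∈ (0, 1/(2+√2))`, threshold
`s_h = λ/√(h(L² + a))`), for `x ≤ y` and every nondecreasing convex `f : ℝ → ℝ`,
`E f(E^h(x, Z̃^h)) ≤ E f(E^h(y, Z̃^h))`. -/
theorem truncatedEuler_increasingConvex_mono {Ω : Type*} [MeasurableSpace Ω]
    (P : Measure Ω) [IsProbabilityMeasure P]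
    (Z : Ω → ℝ) (hZmeas : Measurable Z) (hZ : Measure.map Z P = gaussianReal 0 1)
    (σ β : ℝ → ℝ) (L : ℝ) (hL : 0 < L)
    (hσ0 : ∀ x, 0 ≤ σ x) (hσLip : ∀ x y, |σ x - σ y| ≤ L * |x - y|)
    (a : ℝ) (ha : 0 ≤ a) (hsc : ConvexOn ℝ Set.univ fun x => σ x ^ 2 + a * x ^ 2)
    (hβ : ConvexOn ℝ Set.univ β)
    (c : ℝ) (hc : 0 ≤ c) (hmono : Monotone fun x => β x + c * x)
    (h : ℝ) (hh : 0 < h) (hch : 2 * c * h < 1)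
    (lam : ℝ) (hlam : lam ∈ Set.Ioo 0 (1 / (2 + Real.sqrt 2)))
    (x y : ℝ) (hxy : x ≤ y)
    (f : ℝ → ℝ) (hfmono : Monotone f) (hfcvx : ConvexOn ℝ Set.univ f) :
    ∫ ω, f (x + h * β x + Real.sqrt h * σ x *
        (if |Z ω| ≤ lam / Real.sqrt (h * (L ^ 2 + a)) then Z ω else 0)) ∂P ≤
      ∫ ω, f (y + h * β y + Real.sqrt h * σ y *
        (if |Z ω| ≤ lam / Real.sqrt (h * (L ^ 2 + a)) then Z ω else 0)) ∂P := by
  set s : ℝ := lam / Real.sqrt (h * (L ^ 2 + a)) with hsdef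
  have hD : 0 < Real.sqrt (h * (L ^ 2 + a)) := Real.sqrt_pos.mpr (by positivity)
  have hs : 0 < s := div_pos hlam.1 hD
  set Zt : Ω → ℝ := fun ω => if |Z ω| ≤ s then Z ω else 0 with hZtdef
  have hZt : Measurable Zt :=
    Measurable.ite (measurableSet_le hZmeas.abs measurable_const) hZmeas measurable_const
  have hZtb : ∀ ω, |Zt ω| ≤ s := by
    intro ω
    by_cases hω : |Z ω| ≤ s <;> simp [Zt, hω, hs.le]
  have hfm : Measurable f := hfmono.measurable
  -- integrability of each side
  have key : ∀ u : ℝ,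
      Integrable (fun ω => f (u + h * β u + Real.sqrt h * σ u * Zt ω)) P := by
    intro u
    have hmeas : Measurable fun ω => f (u + h * β u + Real.sqrt h * σ u * Zt ω) :=
      hfm.comp ((measurable_const.add ((hZt.const_mul _))))
    set r : ℝ := Real.sqrt h * σ u * s with hrdef
    have hr : 0 ≤ r :=
      mul_nonneg (mul_nonneg (Real.sqrt_nonneg h) (hσ0 u)) hs.le
    refine (integrable_const (max ‖f (u + h * β u - r)‖ ‖f (u + h * β u + r)‖)).mono'
      hmeas.aestronglyMeasurable (Filter.Eventually.of_forall fun ω => ?_)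
    have h1 : |Real.sqrt h * σ u * Zt ω| ≤ r := by
      rw [abs_mul]
      have h2 : |Real.sqrt h * σ u| = Real.sqrt h * σ u := by
        exact abs_of_nonneg (mul_nonneg (Real.sqrt_nonneg h) (hσ0 u))
      rw [h2, hrdef]
      exact mul_le_mul_of_nonneg_left (hZtb ω)
        (mul_nonneg (Real.sqrt_nonneg h) (hσ0 u))
    have habs := abs_le.mp h1
    have hlo : u + h * β u - r ≤ u + h * β u + Real.sqrt h * σ u * Zt ω := by linarith
    have hhi : u + h * β u + Real.sqrt h * σ u * Zt ω ≤ u + h * β u + r := by linarith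
    have f1 := hfmono hlo
    have f2 := hfmono hhi
    simp only [Real.norm_eq_abs]
    rw [abs_le]
    constructor
    · calc -(max |f (u + h * β u - r)| |f (u + h * β u + r)|)
          ≤ -|f (u + h * β u - r)| := by
            exact neg_le_neg (le_max_left _ _)
        _ ≤ f (u + h * β u - r) := neg_abs_le _
        _ ≤ _ := f1
    · calc f (u + h * β u + Real.sqrt h * σ u * Zt ω)
          ≤ f (u + h * β u + r) := f2
        _ ≤ |f (u + h * β u + r)| := le_abs_self _
        _ ≤ _ := le_max_right _ _
  -- pointwise monotonicity
  have hpt : ∀ ω, f (x + h * β x + Real.sqrt h * σ x * Zt ω) ≤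
      f (y + h * β y + Real.sqrt h * σ y * Zt ω) := by
    intro ω
    apply hfmono
    set z := Zt ω with hz
    have hzb : |z| ≤ s := hZtb ω
    -- β part
    have hβd : -(c * (y - x)) ≤ β y - β x := by
      have := hmono hxy
      simp only at this
      linarith
    -- σ part
    have hσd : |σ y - σ x| ≤ L * (y - x) := by
      have := hσLip y x
      rwa [abs_of_nonneg (sub_nonneg.mpr hxy)] at this
    -- √h L |z| ≤ lam
    have hLD : Real.sqrt h * L ≤ Real.sqrt (h * (L ^ 2 + a)) := by
      have e : Real.sqrt h * L = Real.sqrt (h * L ^ 2) := by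
        rw [Real.sqrt_mul hh.le, Real.sqrt_sq hL.le]
      rw [e]
      exact Real.sqrt_le_sqrt (by nlinarith)
    have hzL : Real.sqrt h * L * |z| ≤ lam := by
      calc Real.sqrt h * L * |z| ≤ Real.sqrt h * L * s :=
            mul_le_mul_of_nonneg_left hzb (by positivity)
        _ ≤ Real.sqrt (h * (L ^ 2 + a)) * (lam / Real.sqrt (h * (L ^ 2 + a))) :=
            mul_le_mul_of_nonneg_right hLD hs.le
        _ = lam := by field_simp
    -- bound on noise contribution
    have h4 : -(Real.sqrt h * |z| * |σ y - σ x|) ≤ Real.sqrt h * σ y * z - Real.sqrt h * σ x * z := by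
      have e1 : Real.sqrt h * σ y * z - Real.sqrt h * σ x * z = Real.sqrt h * ((σ y - σ x) * z) := by
        ring
      have e2 := neg_abs_le (Real.sqrt h * ((σ y - σ x) * z))
      rw [abs_mul, abs_mul, abs_of_nonneg (Real.sqrt_nonneg h)] at e2
      rw [e1]
      nlinarith [Real.sqrt_nonneg h, abs_nonneg z, abs_nonneg (σ y - σ x)]
    have h5 : Real.sqrt h * |z| * |σ y - σ x| ≤ lam * (y - x) := by
      calc Real.sqrt h * |z| * |σ y - σ x| ≤ Real.sqrt h * |z| * (L * (y - x)) :=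
            mul_le_mul_of_nonneg_left hσd (by positivity)
        _ = (Real.sqrt h * L * |z|) * (y - x) := by ring
        _ ≤ lam * (y - x) := mul_le_mul_of_nonneg_right hzL (sub_nonneg.mpr hxy)
    -- lam < 1/2
    have hl2 : lam < 1 / 2 := by
      have h6 : (1 : ℝ) / (2 + Real.sqrt 2) ≤ 1 / 2 := by
        apply one_div_le_one_div_of_le (by norm_num)
        nlinarith [Real.sqrt_nonneg 2]
      exact lt_of_lt_of_le hlam.2 h6
    have hβh : -(c * h * (y - x)) ≤ h * (β y - β x) := by nlinarith
    nlinarith [mul_le_mul_of_nonneg_right (le_of_lt hl2) (sub_nonneg.mpr hxy),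
      mul_le_mul_of_nonneg_right (le_of_lt hch) (sub_nonneg.mpr hxy)]
  exact integral_mono (key x) (key y) hpt
end

section
/- Characterization of the convex order by Lipschitz convex test functions: let U and V be integrable ℝ^d-valued random vectors such that E f(U) ≤ E f(V) for every Lipschitz continuous convex function f : ℝ^d → ℝ. Then for every convex function f : ℝ^d → ℝ such that f∘U and f∘V are integrable, E f(U) ≤ E f(V). -/
open MeasureTheory

section Aux

variable {E : Type*} [NormedAddCommGroup E] [NormedSpace ℝ E]

lemma affine_convexOn (L : E →L[ℝ] ℝ) (c : ℝ) : ConvexOn ℝ Set.univ (fun x => L x + c) := by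
  refine ⟨convex_univ, fun x _ y _ p q hp hq hpq => le_of_eq ?_⟩
  simp only [map_add, _root_.map_smul, smul_eq_mul]
  linear_combination (-c) * hpq

lemma affine_lipschitz (L : E →L[ℝ] ℝ) (c : ℝ) :
    ∃ K : NNReal, LipschitzWith K (fun x => L x + c) := by
  refine ⟨‖L‖₊, LipschitzWith.of_dist_le_mul fun x y => ?_⟩
  simpa [Real.dist_eq, dist_eq_norm] using L.lipschitz.dist_le_mul x y

lemma exists_affine_minorant {d : ℕ} (f : EuclideanSpace ℝ (Fin d) → ℝ)
    (hf : ConvexOn ℝ Set.univ f) :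
    ∃ (L : EuclideanSpace ℝ (Fin d) →L[ℝ] ℝ) (c : ℝ), ∀ x, L x + c ≤ f x := by
  have hcont : Continuous f := by
    rw [← continuousOn_univ]
    exact hf.continuousOn isOpen_univ
  set t : Set (EuclideanSpace ℝ (Fin d) × ℝ) := {p | f p.1 ≤ p.2} with ht
  have hconv : Convex ℝ t := by
    have := hf.convex_epigraph
    simpa using this
  have hclosed : IsClosed t := isClosed_le (hcont.comp continuous_fst) continuous_snd
  have hnot : (0, f 0 - 1) ∉ t := by simp [ht]
  obtain ⟨l, s, hx, hts⟩ := geometric_hahn_banach_point_closed hconv hclosed hnot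
  set c := l (0, 1) with hc
  have h0 : ((0 : EuclideanSpace ℝ (Fin d)), (0:ℝ)) = 0 := rfl
  have hdecomp : ∀ (x : EuclideanSpace ℝ (Fin d)) (y : ℝ), l (x, y) = l (x, 0) + y * c := by
    intro x y
    have heq : (x, y) = (x, (0:ℝ)) + y • ((0 : EuclideanSpace ℝ (Fin d)), (1:ℝ)) := by
      simp [Prod.ext_iff]
    rw [heq, map_add, _root_.map_smul, smul_eq_mul]
  have hl00 : l (0, 0) = 0 := by rw [h0, map_zero]
  have hcpos : 0 < c := by
    rcases lt_trichotomy c 0 with h | h | h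
    · exfalso
      set y := max (f 0) ((s-1)/c) with hy
      have h1 : s < l (0, y) := hts _ (by simp [ht, hy, le_max_left])
      rw [hdecomp, hl00] at h1
      have h2 : y ≥ (s-1)/c := le_max_right _ _
      nlinarith [(div_le_iff_of_neg h).mp h2]
    · exfalso
      have h1 : s < l (0, f 0) := hts _ (by simp [ht])
      rw [hdecomp, hl00, h] at h1
      have h2 : l (0, f 0 - 1) < s := hx
      rw [hdecomp, hl00, h] at h2
      linarith
    · exact h
  refine ⟨(-c⁻¹) • (l.comp (ContinuousLinearMap.inl ℝ _ ℝ)), s/c, fun x => ?_⟩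
  have h1 : s < l (x, f x) := hts _ (by simp [ht])
  rw [hdecomp] at h1
  have happ : ((-c⁻¹) • (l.comp (ContinuousLinearMap.inl ℝ _ ℝ))) x = -c⁻¹ * l (x, 0) := by
    simp [ContinuousLinearMap.smul_apply, smul_eq_mul]
  rw [happ]
  have hc0 : c ≠ 0 := ne_of_gt hcpos
  have key : s - l (x, 0) ≤ f x * c := by linarith
  calc -c⁻¹ * l (x, 0) + s/c = (s - l (x, 0))/c := by field_simp; ring
  _ ≤ f x := by rw [div_le_iff₀ hcpos]; linarith

noncomputable def infConv (g : E → ℝ) (n : ℕ) (x : E) : ℝ := ⨅ y, g y + n * ‖x - y‖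

lemma infConv_bdd (g : E → ℝ) (hg0 : ∀ x, 0 ≤ g x) (n : ℕ) (x : E) :
    BddBelow (Set.range fun y => g y + n * ‖x - y‖) := by
  refine ⟨0, fun z hz => ?_⟩
  obtain ⟨y, rfl⟩ := hz
  have := hg0 y
  positivity

lemma infConv_le (g : E → ℝ) (hg0 : ∀ x, 0 ≤ g x) (n : ℕ) (x : E) : infConv g n x ≤ g x := by
  have := ciInf_le (infConv_bdd g hg0 n x) x
  simpa [infConv] using this

lemma infConv_nonneg (g : E → ℝ) (hg0 : ∀ x, 0 ≤ g x) (n : ℕ) (x : E) : 0 ≤ infConv g n x :=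
  le_ciInf fun y => by have := hg0 y; positivity

lemma infConv_le_add (g : E → ℝ) (hg0 : ∀ x, 0 ≤ g x) (n : ℕ) (x x' : E) :
    infConv g n x ≤ infConv g n x' + n * ‖x - x'‖ := by
  rw [← sub_le_iff_le_add]
  refine le_ciInf fun y => ?_
  rw [sub_le_iff_le_add]
  have h1 : infConv g n x ≤ g y + n * ‖x - y‖ := ciInf_le (infConv_bdd g hg0 n x) y
  have h2 : ‖x - y‖ ≤ ‖x - x'‖ + ‖x' - y‖ := by
    simpa [dist_eq_norm] using dist_triangle x x' y
  nlinarith [Nat.cast_nonneg (α := ℝ) n]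

lemma infConv_lipschitz (g : E → ℝ) (hg0 : ∀ x, 0 ≤ g x) (n : ℕ) :
    LipschitzWith n (infConv g n) := by
  refine LipschitzWith.of_dist_le_mul fun x x' => ?_
  rw [Real.dist_eq, abs_sub_le_iff]
  have h1 := infConv_le_add g hg0 n x x'
  have h2 := infConv_le_add g hg0 n x' x
  rw [norm_sub_rev x' x] at h2
  constructor <;> · rw [dist_eq_norm]; push_cast; linarith

lemma infConv_convexOn (g : E → ℝ) (hg0 : ∀ x, 0 ≤ g x) (hg : ConvexOn ℝ Set.univ g) (n : ℕ) :
    ConvexOn ℝ Set.univ (infConv g n) := by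
  refine ⟨convex_univ, fun x _ y _ p q hp hq hpq => ?_⟩
  refine le_of_forall_pos_le_add fun ε hε => ?_
  have hx : infConv g n x < infConv g n x + ε/2 := by linarith
  have hy : infConv g n y < infConv g n y + ε/2 := by linarith
  obtain ⟨y₁, hy₁⟩ := exists_lt_of_ciInf_lt hx
  obtain ⟨y₂, hy₂⟩ := exists_lt_of_ciInf_lt hy
  have key : infConv g n (p • x + q • y) ≤
      g (p • y₁ + q • y₂) + n * ‖(p • x + q • y) - (p • y₁ + q • y₂)‖ :=
    ciInf_le (infConv_bdd g hg0 n _) _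
  have hgc : g (p • y₁ + q • y₂) ≤ p * g y₁ + q * g y₂ := by
    have := hg.2 (Set.mem_univ y₁) (Set.mem_univ y₂) hp hq hpq
    simpa [smul_eq_mul] using this
  have hnorm : ‖(p • x + q • y) - (p • y₁ + q • y₂)‖ ≤ p * ‖x - y₁‖ + q * ‖y - y₂‖ := by
    have heq : (p • x + q • y) - (p • y₁ + q • y₂) = p • (x - y₁) + q • (y - y₂) := by
      module
    rw [heq]
    calc ‖p • (x - y₁) + q • (y - y₂)‖ ≤ ‖p • (x - y₁)‖ + ‖q • (y - y₂)‖ := norm_add_le _ _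
    _ = p * ‖x - y₁‖ + q * ‖y - y₂‖ := by
        rw [norm_smul, norm_smul, Real.norm_eq_abs, Real.norm_eq_abs, abs_of_nonneg hp,
          abs_of_nonneg hq]
  have hn : (0:ℝ) ≤ n := Nat.cast_nonneg n
  have hmain : infConv g n (p • x + q • y) ≤
      p * (g y₁ + n * ‖x - y₁‖) + q * (g y₂ + n * ‖y - y₂‖) := by nlinarith
  have hfin : p * (g y₁ + n * ‖x - y₁‖) + q * (g y₂ + n * ‖y - y₂‖) ≤
      p * (infConv g n x + ε/2) + q * (infConv g n y + ε/2) := by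
    have h1 := le_of_lt hy₁
    have h2 := le_of_lt hy₂
    nlinarith
  have hend : infConv g n (p • x + q • y) ≤ p * infConv g n x + q * infConv g n y + ε := by
    nlinarith
  simpa [smul_eq_mul] using hend

lemma infConv_tendsto (g : E → ℝ) (hg0 : ∀ x, 0 ≤ g x) (hgc : Continuous g) (x : E) :
    Filter.Tendsto (fun n : ℕ => infConv g n x) Filter.atTop (nhds (g x)) := by
  rw [Metric.tendsto_atTop]
  intro ε hε
  obtain ⟨δ, hδ, hcont⟩ := Metric.continuousAt_iff.mp (hgc.continuousAt (x := x)) (ε/2) (by linarith)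
  refine ⟨⌈g x / (δ/2)⌉₊, fun n hn => ?_⟩
  have hδ2 : (0:ℝ) < δ/2 := by linarith
  have hN : g x / (δ/2) ≤ (n : ℝ) := le_trans (Nat.le_ceil _) (by exact_mod_cast hn)
  have hnδ : g x ≤ (n : ℝ) * (δ/2) := by
    rw [div_le_iff₀ hδ2] at hN
    linarith
  have hlow : g x - ε/2 ≤ infConv g n x := by
    refine le_ciInf fun y => ?_
    by_cases hcase : ‖x - y‖ ≤ δ/2
    · have hd : dist y x < δ := by
        rw [dist_eq_norm, ← norm_neg]
        simpa [neg_sub] using lt_of_le_of_lt hcase (by linarith)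
      have := hcont hd
      rw [Real.dist_eq, abs_sub_lt_iff] at this
      have hn0 : (0:ℝ) ≤ (n:ℝ) * ‖x - y‖ := by positivity
      linarith [this.2]
    · push_neg at hcase
      have : (n:ℝ) * (δ/2) ≤ (n:ℝ) * ‖x - y‖ :=
        mul_le_mul_of_nonneg_left (le_of_lt hcase) (Nat.cast_nonneg n)
      linarith [hg0 y]
  have hhigh := infConv_le g hg0 n x
  rw [Real.dist_eq, abs_sub_lt_iff]
  constructor <;> linarith

end Aux

/-- **The convex order is characterized by Lipschitz convex test functions.**
If `E f(U) ≤ E f(V)` holds for every Lipschitz continuous convex `f : ℝ^d → ℝ`, then it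
holds for every convex `f : ℝ^d → ℝ` such that `f∘U` and `f∘V` are integrable. -/
theorem convexOrder_of_lipschitz_convex {d : ℕ} {Ω : Type*} [MeasurableSpace Ω]
    (P : Measure Ω) [IsProbabilityMeasure P]
    (U V : Ω → EuclideanSpace ℝ (Fin d))
    (hU : Integrable U P) (hV : Integrable V P)
    (hord : ∀ f : EuclideanSpace ℝ (Fin d) → ℝ, ConvexOn ℝ Set.univ f →
      (∃ K : NNReal, LipschitzWith K f) →
      ∫ ω, f (U ω) ∂P ≤ ∫ ω, f (V ω) ∂P) :
    ∀ f : EuclideanSpace ℝ (Fin d) → ℝ, ConvexOn ℝ Set.univ f →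
      Integrable (fun ω => f (U ω)) P → Integrable (fun ω => f (V ω)) P →
      ∫ ω, f (U ω) ∂P ≤ ∫ ω, f (V ω) ∂P := by
  intro f hf hfU hfV
  obtain ⟨L, c, hmin⟩ := exists_affine_minorant f hf
  set a : EuclideanSpace ℝ (Fin d) → ℝ := fun x => L x + c with ha
  have haU : Integrable (fun ω => a (U ω)) P := (L.integrable_comp hU).add (integrable_const c)
  have haV : Integrable (fun ω => a (V ω)) P := (L.integrable_comp hV).add (integrable_const c)
  have haeq : ∫ ω, a (U ω) ∂P = ∫ ω, a (V ω) ∂P := by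
    have h1 := hord a (affine_convexOn L c) (affine_lipschitz L c)
    have h2 := hord (fun x => (-L) x + (-c)) (affine_convexOn (-L) (-c))
      (affine_lipschitz (-L) (-c))
    have hneg : (fun x : EuclideanSpace ℝ (Fin d) => (-L) x + (-c)) = fun x => -(a x) := by
      funext x; simp [ha]; ring
    change ∫ ω, (fun x => (-L) x + -c) (U ω) ∂P ≤ ∫ ω, (fun x => (-L) x + -c) (V ω) ∂P at h2
    rw [hneg] at h2
    simp only [integral_neg] at h2
    exact le_antisymm h1 (by linarith)
  set g : EuclideanSpace ℝ (Fin d) → ℝ := fun x => f x - a x with hg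
  have hg0 : ∀ x, 0 ≤ g x := fun x => sub_nonneg.mpr (hmin x)
  have haconc : ConcaveOn ℝ Set.univ a := by
    have := (affine_convexOn (-L) (-c)).neg
    have heq : (-fun x : EuclideanSpace ℝ (Fin d) => (-L) x + (-c)) = a := by
      funext x; simp [ha]; ring
    rwa [heq] at this
  have hgconv : ConvexOn ℝ Set.univ g := hf.sub haconc
  have hfcont : Continuous f := by
    rw [← continuousOn_univ]
    exact hf.continuousOn isOpen_univ
  have hgcont : Continuous g := hfcont.sub (L.continuous.add continuous_const)
  have hgU : Integrable (fun ω => g (U ω)) P := hfU.sub haU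
  have hgV : Integrable (fun ω => g (V ω)) P := hfV.sub haV
  have hGUm : ∀ n : ℕ, AEStronglyMeasurable (fun ω => infConv g n (U ω)) P := fun n =>
    ((infConv_lipschitz g hg0 n).continuous).comp_aestronglyMeasurable hU.1
  have hGVm : ∀ n : ℕ, AEStronglyMeasurable (fun ω => infConv g n (V ω)) P := fun n =>
    ((infConv_lipschitz g hg0 n).continuous).comp_aestronglyMeasurable hV.1
  have hbndU : ∀ n : ℕ, ∀ ω, ‖infConv g n (U ω)‖ ≤ g (U ω) := fun n ω => by
    rw [Real.norm_eq_abs, abs_of_nonneg (infConv_nonneg g hg0 n _)]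
    exact infConv_le g hg0 n _
  have hbndV : ∀ n : ℕ, ∀ ω, ‖infConv g n (V ω)‖ ≤ g (V ω) := fun n ω => by
    rw [Real.norm_eq_abs, abs_of_nonneg (infConv_nonneg g hg0 n _)]
    exact infConv_le g hg0 n _
  have hGUi : ∀ n : ℕ, Integrable (fun ω => infConv g n (U ω)) P := fun n =>
    Integrable.mono' hgU (hGUm n) (Filter.Eventually.of_forall (hbndU n))
  have hGVi : ∀ n : ℕ, Integrable (fun ω => infConv g n (V ω)) P := fun n =>
    Integrable.mono' hgV (hGVm n) (Filter.Eventually.of_forall (hbndV n))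
  have hstep : ∀ n : ℕ, ∫ ω, infConv g n (U ω) ∂P ≤ ∫ ω, g (V ω) ∂P := fun n =>
    le_trans
      (hord _ (infConv_convexOn g hg0 hgconv n) ⟨n, infConv_lipschitz g hg0 n⟩)
      (integral_mono (hGVi n) hgV fun ω => infConv_le g hg0 n _)
  have htend : Filter.Tendsto (fun n : ℕ => ∫ ω, infConv g n (U ω) ∂P) Filter.atTop
      (nhds (∫ ω, g (U ω) ∂P)) := by
    refine tendsto_integral_of_dominated_convergence (fun ω => g (U ω)) hGUm hgU
      (fun n => Filter.Eventually.of_forall (hbndU n))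
      (Filter.Eventually.of_forall fun ω => infConv_tendsto g hg0 hgcont (U ω))
  have hgle : ∫ ω, g (U ω) ∂P ≤ ∫ ω, g (V ω) ∂P :=
    le_of_tendsto htend (Filter.Eventually.of_forall hstep)
  have hfU' : (fun ω => f (U ω)) = fun ω => g (U ω) + a (U ω) := by
    funext ω; simp [hg]
  have hfV' : (fun ω => f (V ω)) = fun ω => g (V ω) + a (V ω) := by
    funext ω; simp [hg]
  rw [hfU', hfV', integral_add hgU haU, integral_add hgV haV, haeq]
  linarith
end

section
/- Explicit Cholesky decomposition of the equicorrelation matrix: let q ≥ 1 and ρ ∈ (−1/(q−1), 1). Define d_1 = 1, ℓ_1 = ρ and, for j ≥ 2, d_j = √(d_{j−1}² − ℓ_{j−1}²) and ℓ_j = (ρ − 1)/d_j + d_j. Let L(ρ) be the q×q lower-triangular matrix with diagonal entries L_{jj} = d_j and sub-diagonal entries L_{ij} = ℓ_j for i > j (and 0 above the diagonal). Then L(ρ) · L(ρ)ᵀ = Γ(ρ), where Γ(ρ) is the q×q matrix with diagonal entries 1 and all off-diagonal entries equal to ρ. -/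
open Matrix

/-- **Explicit Cholesky decomposition of the equicorrelation matrix.**
For `ρ ∈ (−1/(q−1), 1)`, the lower-triangular matrix with diagonal entries `d_j` and
sub-diagonal entries `ℓ_j` (column `j`), where `d_1 = 1`, `ℓ_1 = ρ`,
`d_j = √(d_{j−1}² − ℓ_{j−1}²)` and `ℓ_j = (ρ−1)/d_j + d_j`, satisfies
`L(ρ) L(ρ)ᵀ = Γ(ρ)` with `Γ(ρ)` the matrix with `1` on the diagonal and `ρ` elsewhere. -/
theorem equicorrelation_cholesky (q : ℕ) (hq : 1 ≤ q) (ρ : ℝ)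
    (hρ₁ : -(1 / ((q : ℝ) - 1)) < ρ) (hρ₂ : ρ < 1)
    (D E : ℕ → ℝ) (hD1 : D 1 = 1) (hE1 : E 1 = ρ)
    (hD : ∀ j, 1 ≤ j → D (j + 1) = Real.sqrt (D j ^ 2 - E j ^ 2))
    (hE : ∀ j, 1 ≤ j → E (j + 1) = (ρ - 1) / D (j + 1) + D (j + 1)) :
    (Matrix.of fun i j : Fin q =>
        if i = j then D (j.val + 1) else if (j : ℕ) < (i : ℕ) then E (j.val + 1) else 0) *
      (Matrix.of fun i j : Fin q =>
        if i = j then D (j.val + 1) else if (j : ℕ) < (i : ℕ) then E (j.val + 1) else 0)ᵀ =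
    (Matrix.of fun i j : Fin q => if i = j then (1 : ℝ) else ρ) := by
  have h1ρ : (0:ℝ) < 1 - ρ := by linarith
  -- the auxiliary sequence f m = 1 + (m-1)ρ
  set f : ℕ → ℝ := fun m => 1 + ((m : ℝ) - 1) * ρ with hf_def
  have hf : ∀ m : ℕ, m ≤ q → 0 < f m := by
    intro m hm
    have hm' : (m : ℝ) ≤ (q : ℝ) := by exact_mod_cast hm
    simp only [hf_def]
    rcases Nat.eq_zero_or_pos m with rfl | hm1
    · push_cast; nlinarith
    · have hm1' : (1:ℝ) ≤ (m:ℝ) := by exact_mod_cast hm1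
      rcases le_or_gt 0 ρ with hρ | hρ
      · nlinarith [mul_nonneg (sub_nonneg.mpr hm1') hρ]
      · rcases Nat.lt_or_ge q 2 with hq2 | hq2
        · interval_cases q
          · norm_num at hρ₁
            linarith
        · have hq2' : (2:ℝ) ≤ (q:ℝ) := by exact_mod_cast hq2
          have hc : (0:ℝ) < (q:ℝ) - 1 := by linarith
          have hmul : -(1 / ((q:ℝ) - 1)) * ((q:ℝ) - 1) < ρ * ((q:ℝ) - 1) :=
            mul_lt_mul_of_pos_right hρ₁ hc
          rw [neg_mul, div_mul_cancel₀ _ (ne_of_gt hc)] at hmul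
          -- so ρ * (q - 1) > -1; and (m-1)ρ ≥ (q-1)ρ since ρ < 0, m ≤ q
          nlinarith [mul_le_mul_of_nonpos_right (by linarith : (m:ℝ) - 1 ≤ (q:ℝ) - 1) (le_of_lt hρ)]
  have hf_succ : ∀ m : ℕ, f (m + 1) = f m + ρ := by
    intro m; simp only [hf_def]; push_cast; ring
  -- the key invariant : positivity of D together with the closed formula for D j ^ 2
  have hKey : ∀ j : ℕ, 1 ≤ j → j ≤ q → 0 < D j ∧ D j ^ 2 = (1 - ρ) * f j / f (j - 1) := by
    intro j
    induction j with
    | zero => omega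
    | succ n ih =>
      intro _ hle
      rcases Nat.eq_zero_or_pos n with rfl | hn1
      · refine ⟨by rw [hD1]; norm_num, ?_⟩
        have hf1 : f 1 = 1 := by simp [hf_def]
        have hf0 : f 0 = 1 - ρ := by simp [hf_def]; ring
        simp only [Nat.sub_self, hf1]
        rw [hD1, hf0, one_pow]
        field_simp
      · obtain ⟨hDn, hDn2⟩ := ih hn1 (by omega)
        have hDn0 : D n ≠ 0 := ne_of_gt hDn
        -- E n * D n = ρ - 1 + D n ^ 2
        have hEn : E n * D n = ρ - 1 + D n ^ 2 := by
          rcases Nat.eq_or_lt_of_le hn1 with h1 | h1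
          · rw [← h1, hE1, hD1]; ring
          · obtain ⟨m, rfl⟩ : ∃ m, n = m + 1 := ⟨n - 1, by omega⟩
            rw [hE m (by omega)]
            field_simp
        have hfa : 0 < f (n - 1) := hf _ (by omega)
        have hfb : 0 < f n := hf _ (by omega)
        have hfc : 0 < f (n + 1) := hf _ (by omega)
        have hab : f (n - 1) = f n - ρ := by
          have := hf_succ (n - 1)
          rw [Nat.sub_add_cancel hn1] at this
          linarith
        have hbc : f (n + 1) = f n + ρ := hf_succ n
        rw [hab] at hDn2 hfa
        -- `(ρ - 1 + D n ^ 2) * (f n - ρ) = (1 - ρ) * ρ`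
        have hDn2' : D n ^ 2 * (f n - ρ) = (1 - ρ) * f n := by
          rw [hDn2]; field_simp
        have h2 : E n * D n * (f n - ρ) = (1 - ρ) * ρ := by
          rw [hEn]; linear_combination hDn2'
        have hE2 : E n ^ 2 = ((1 - ρ) * ρ) ^ 2 / (D n ^ 2 * (f n - ρ) ^ 2) := by
          rw [eq_div_iff (by positivity)]
          linear_combination (E n * D n * (f n - ρ) + (1 - ρ) * ρ) * h2
        have harg : D n ^ 2 - E n ^ 2 = (1 - ρ) * f (n + 1) / f n := by
          rw [hE2, hDn2, hbc]
          field_simp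
          ring
        have hargpos : 0 < D n ^ 2 - E n ^ 2 := by
          rw [harg]; positivity
        constructor
        · rw [hD n hn1]
          exact Real.sqrt_pos.mpr hargpos
        · rw [hD n hn1, Real.sq_sqrt (le_of_lt hargpos), harg]
          simp
  -- E j * D j = ρ - 1 + D j ^ 2 for all relevant j
  have hED : ∀ j : ℕ, 1 ≤ j → j ≤ q → E j * D j = ρ - 1 + D j ^ 2 := by
    intro j hj1 hjq
    rcases Nat.eq_or_lt_of_le hj1 with h1 | h1
    · rw [← h1, hE1, hD1]; ring
    · obtain ⟨m, rfl⟩ : ∃ m, j = m + 1 := ⟨j - 1, by omega⟩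
      have hpos : 0 < D (m + 1) := (hKey (m + 1) (by omega) hjq).1
      have h0 : D (m + 1) ≠ 0 := ne_of_gt hpos
      rw [hE m (by omega)]
      field_simp
  -- partial sums of squares of the subdiagonal entries
  have hT : ∀ n : ℕ, n < q → ∑ m ∈ Finset.range n, E (m + 1) ^ 2 = 1 - D (n + 1) ^ 2 := by
    intro n
    induction n with
    | zero => intro _; simp [hD1]
    | succ n ih =>
      intro hn
      rw [Finset.sum_range_succ, ih (by omega)]
      have hpos : 0 < D (n + 2) := (hKey (n + 2) (by omega) (by omega)).1
      rw [hD (n + 1) (by omega)] at hpos ⊢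
      have hnonneg : 0 ≤ D (n + 1) ^ 2 - E (n + 1) ^ 2 := by
        by_contra hc
        push_neg at hc
        rw [Real.sqrt_eq_zero_of_nonpos (le_of_lt hc)] at hpos
        exact lt_irrefl 0 hpos
      rw [Real.sq_sqrt hnonneg]
      ring
  -- abbreviate the lower-triangular matrix
  set A : Fin q → Fin q → ℝ := fun i j =>
    if i = j then D (j.val + 1) else if (j : ℕ) < (i : ℕ) then E (j.val + 1) else 0 with hA
  -- main computation for k ≤ i
  have main : ∀ i k : Fin q, (k : ℕ) ≤ (i : ℕ) →
      (∑ m : Fin q, A i m * A k m) = if i = k then (1:ℝ) else ρ := by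
    intro i k hki
    have hsum : ∀ m : Fin q, A i m * A k m =
        (if m = k then (if i = k then D (k.val + 1) else E (k.val + 1)) * D (k.val + 1) else 0) +
        (if (m : ℕ) < (k : ℕ) then E (m.val + 1) ^ 2 else 0) := by
      intro m
      simp only [hA]
      rcases lt_trichotomy (m : ℕ) (k : ℕ) with h | h | h
      · have h1 : ¬ i = m := by
          intro e; rw [e] at hki; omega
        have h2 : ¬ k = m := by
          intro e; rw [e] at h; omega
        have h3 : m ≠ k := fun e => by rw [e] at h; omega
        have h4 : (m : ℕ) < (i : ℕ) := by omega
        simp [h1, h2, h3, h, h4, sq]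
      · have hm : m = k := Fin.ext h
        subst hm
        by_cases hik : i = m
        · simp [hik]
        · have h4 : (m : ℕ) < (i : ℕ) := by
            rcases Nat.eq_or_lt_of_le hki with h5 | h5
            · exact absurd (Fin.ext h5.symm) hik
            · exact h5
        
          simp [hik, h4]
      · have h1 : ¬ k = m := by
          intro e; rw [e] at h; omega
        have h2 : m ≠ k := fun e => by rw [e] at h; omega
        have h3 : ¬ (m : ℕ) < (k : ℕ) := by omega
        simp [h1, h2, h3]
    rw [Finset.sum_congr rfl (fun m _ => hsum m), Finset.sum_add_distrib]
    have e1 : (∑ m : Fin q, if m = k then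
        (if i = k then D (k.val + 1) else E (k.val + 1)) * D (k.val + 1) else 0) =
        (if i = k then D (k.val + 1) else E (k.val + 1)) * D (k.val + 1) := by
      simp
    have e2 : (∑ m : Fin q, if (m : ℕ) < (k : ℕ) then E (m.val + 1) ^ 2 else 0) =
        ∑ m ∈ Finset.range k.val, E (m + 1) ^ 2 := by
      rw [Fin.sum_univ_eq_sum_range (fun n => if n < (k : ℕ) then E (n + 1) ^ 2 else 0) q]
      rw [← Finset.sum_filter]
      congr 1
      ext x
      simp only [Finset.mem_filter, Finset.mem_range]
      omega
    rw [e1, e2, hT k.val k.isLt]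
    by_cases hik : i = k
    · simp only [hik, if_pos]
      ring
    · simp only [hik, if_neg, ite_false]
      have := hED (k.val + 1) (by omega) (by omega)
      linear_combination this
  ext i k
  rw [Matrix.mul_apply]
  simp only [Matrix.of_apply, Matrix.transpose_apply]
  rcases le_total (k : ℕ) (i : ℕ) with h | h
  · exact main i k h
  · have h1 := main k i h
    have h2 : (∑ m : Fin q, A i m * A k m) = ∑ m : Fin q, A k m * A i m :=
      Finset.sum_congr rfl fun m _ => mul_comm _ _
    rw [h2, h1]
    by_cases hik : i = k
    · simp [hik]
    · have hki : ¬ k = i := fun e => hik e.symm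
      simp [hik, hki]
end
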